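/- arXiv:2405.01890 — 7 statements merged into one kernel-verified Lean document; each statement's English description precedes it below -/
import Mathlib

section
/- For an $n$-vertex graph $G$, the mean color number satisfies $\mu(G)=n\left(1-\frac{P(G,n-1)}{P(G,n)}\right)$. -/
open SimpleGraph Finset

/-- `chromP G l` is the number of proper colorings of `G` with colors `{0, …, l-1}`,
i.e. the chromatic polynomial of `G` evaluated at `l`. -/
noncomputable def chromP {V : Type*} (G : SimpleGraph V) (l : ℕ) : ℕ :=
  Nat.card {c : V → Fin l // ∀ u v, G.Adj u v → c u ≠ c v}

/-- The mean color number `μ(G) = n (1 - P(G,n-1)/P(G,n))` of a finite graph `G`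
on `n` vertices. -/
noncomputable def meanColor {V : Type*} [Fintype V] (G : SimpleGraph V) : ℚ :=
  (Fintype.card V : ℚ) *
    (1 - (chromP G (Fintype.card V - 1) : ℚ) / (chromP G (Fintype.card V) : ℚ))

/-- `τ(G, H, n) = P(G,n) P(H,n-1) - P(G,n-1) P(H,n)`. -/
noncomputable def tau {V W : Type*} (G : SimpleGraph V) (H : SimpleGraph W) (n : ℕ) : ℤ :=
  (chromP G n : ℤ) * (chromP H (n - 1) : ℤ) - (chromP G (n - 1) : ℤ) * (chromP H n : ℤ)

/-- `α(G,k)`: the number of partitions of the vertex set of `G` into exactly `k`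
nonempty independent sets. -/
noncomputable def alphaPart {V : Type*} [Fintype V] (G : SimpleGraph V) (k : ℕ) : ℕ :=
  Nat.card {P : Finset (Finset V) //
    P.card = k ∧ (∀ B ∈ P, B.Nonempty) ∧
    (∀ v : V, ∃! B : Finset V, B ∈ P ∧ v ∈ B) ∧
    (∀ B ∈ P, ∀ u ∈ B, ∀ w ∈ B, ¬ G.Adj u w)}

/-- `G ∪ K₁`: the graph `G` with one new isolated vertex (`none`) added. -/
noncomputable def addIsolated {V : Type*} (G : SimpleGraph V) : SimpleGraph (Option V) :=
  G.map Function.Embedding.some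

/-- The graph `G` with one new vertex (`none`) joined to the single vertex `a` of `G`. -/
noncomputable def pendant {V : Type*} (G : SimpleGraph V) (a : V) : SimpleGraph (Option V) :=
  G.map Function.Embedding.some ⊔
    SimpleGraph.fromRel (fun x y => x = none ∧ y = some a)

section Helpers
variable {V : Type*} [DecidableEq V] [Fintype V]

def IsPart (G : SimpleGraph V) (P : Finset (Finset V)) : Prop :=
  (∀ B ∈ P, B.Nonempty) ∧ (∀ v : V, ∃! B : Finset V, B ∈ P ∧ v ∈ B) ∧
  (∀ B ∈ P, ∀ u ∈ B, ∀ w ∈ B, ¬ G.Adj u w)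

def blk {l : ℕ} (c : V → Fin l) (v : V) : Finset V := univ.filter (fun w => c w = c v)

lemma mem_blk {l : ℕ} {c : V → Fin l} {v w : V} : w ∈ blk c v ↔ c w = c v := by
  simp [blk]

def fibs {l : ℕ} (c : V → Fin l) : Finset (Finset V) := univ.image (fun v => blk c v)

lemma block_eq {l : ℕ} {c : V → Fin l} {B : Finset V} (hB : B ∈ fibs c) {u : V}
    (hu : u ∈ B) : B = blk c u := by
  obtain ⟨v, -, rfl⟩ := Finset.mem_image.mp hB
  have hcv : c u = c v := mem_blk.mp hu
  ext w; simp [mem_blk, hcv]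

lemma isPart_fibs {l : ℕ} {G : SimpleGraph V} {c : V → Fin l}
    (hc : ∀ u v, G.Adj u v → c u ≠ c v) : IsPart G (fibs c) := by
  refine ⟨?_, ?_, ?_⟩
  · intro B hB
    obtain ⟨v, -, rfl⟩ := Finset.mem_image.mp hB
    exact ⟨v, mem_blk.mpr rfl⟩
  · intro v
    refine ⟨blk c v, ⟨Finset.mem_image.mpr ⟨v, Finset.mem_univ v, rfl⟩, mem_blk.mpr rfl⟩, ?_⟩
    rintro B ⟨hB, hv⟩
    exact block_eq hB hv
  · intro B hB u hu w hw hadj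
    have h1 := block_eq hB hu
    have h2 := block_eq hB hw
    have : c u = c w := by
      have : u ∈ blk c w := h2 ▸ hu
      exact mem_blk.mp this
    exact hc u w hadj this

noncomputable def blockOf (P : Finset (Finset V))
    (hP : ∀ v : V, ∃! B : Finset V, B ∈ P ∧ v ∈ B) (v : V) : {B // B ∈ P} :=
  ⟨(hP v).exists.choose, (hP v).exists.choose_spec.1⟩

lemma mem_blockOf (P : Finset (Finset V))
    (hP : ∀ v : V, ∃! B : Finset V, B ∈ P ∧ v ∈ B) (v : V) : v ∈ (blockOf P hP v).1 :=
  (hP v).exists.choose_spec.2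

lemma blockOf_eq (P : Finset (Finset V))
    (hP : ∀ v : V, ∃! B : Finset V, B ∈ P ∧ v ∈ B) {B : Finset V} (hB : B ∈ P) {v : V}
    (hv : v ∈ B) : (blockOf P hP v).1 = B :=
  (hP v).unique ⟨(blockOf P hP v).2, mem_blockOf P hP v⟩ ⟨hB, hv⟩

noncomputable def fiberEquiv (G : SimpleGraph V) (l : ℕ) (P : Finset (Finset V))
    (hP : IsPart G P) :
    {c : V → Fin l // (∀ u v, G.Adj u v → c u ≠ c v) ∧ fibs c = P} ≃
      ({B // B ∈ P} ↪ Fin l) := by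
  obtain ⟨h1, h2, h3⟩ := hP
  refine
    { toFun := fun c => ⟨fun B => c.1 (h1 B.1 B.2).choose, ?_⟩
      invFun := fun e => ⟨fun v => e (blockOf P h2 v), ?_, ?_⟩
      left_inv := ?_
      right_inv := ?_ }
  · -- injectivity of the forward map
    rintro ⟨B, hB⟩ ⟨B', hB'⟩ h
    have h' : c.1 (h1 B hB).choose = c.1 (h1 B' hB').choose := h
    have hBm : (h1 B hB).choose ∈ B := (h1 B hB).choose_spec
    have hBm' : (h1 B' hB').choose ∈ B' := (h1 B' hB').choose_spec
    have hBf : B ∈ fibs c.1 := by rw [c.2.2]; exact hB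
    have hBf' : B' ∈ fibs c.1 := by rw [c.2.2]; exact hB'
    have e1 : B = blk c.1 (h1 B hB).choose := block_eq hBf hBm
    have e2 : B' = blk c.1 (h1 B' hB').choose := block_eq hBf' hBm'
    have : blk c.1 (h1 B hB).choose = blk c.1 (h1 B' hB').choose := by
      ext w; simp only [mem_blk]; rw [h']
    exact Subtype.ext (e1.trans (this.trans e2.symm))
  · -- properness of invFun
    intro u v hadj he
    have hbo : blockOf P h2 u = blockOf P h2 v := e.injective he
    have hu : u ∈ (blockOf P h2 v).1 := hbo ▸ mem_blockOf P h2 u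
    exact h3 _ (blockOf P h2 v).2 u hu v (mem_blockOf P h2 v) hadj
  · -- fibs of invFun = P
    have hblk : ∀ v : V, blk (fun v => e (blockOf P h2 v)) v = (blockOf P h2 v).1 := by
      intro v
      ext w
      simp only [mem_blk]
      constructor
      · intro h
        have : blockOf P h2 w = blockOf P h2 v := e.injective h
        exact this ▸ mem_blockOf P h2 w
      · intro h
        have : (blockOf P h2 w).1 = (blockOf P h2 v).1 :=
          blockOf_eq P h2 (blockOf P h2 v).2 h
        rw [Subtype.ext this]
    ext B
    simp only [fibs, Finset.mem_image]
    constructor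
    · rintro ⟨v, -, rfl⟩
      rw [hblk v]; exact (blockOf P h2 v).2
    · intro hB
      obtain ⟨v, hv⟩ := h1 B hB
      exact ⟨v, Finset.mem_univ v, by rw [hblk v, blockOf_eq P h2 hB hv]⟩
  · -- left inverse
    rintro ⟨c, hc, hfc⟩
    apply Subtype.ext
    funext v
    simp only
    set B := blockOf P h2 v with hBdef
    have hBm : (h1 B.1 B.2).choose ∈ B.1 := (h1 B.1 B.2).choose_spec
    have hBf : B.1 ∈ fibs c := by rw [hfc]; exact B.2
    have e1 : B.1 = blk c (h1 B.1 B.2).choose := block_eq hBf hBm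
    have hv : v ∈ B.1 := mem_blockOf P h2 v
    have : v ∈ blk c (h1 B.1 B.2).choose := e1 ▸ hv
    exact (mem_blk.mp this).symm
  · -- right inverse
    intro e
    apply DFunLike.ext
    rintro ⟨B, hB⟩
    simp only
    exact congrArg e (Subtype.ext (blockOf_eq P h2 hB (h1 B hB).choose_spec))

lemma card_fiber (G : SimpleGraph V) (l : ℕ) (P : Finset (Finset V)) (hP : IsPart G P) :
    Nat.card {c : V → Fin l // (∀ u v, G.Adj u v → c u ≠ c v) ∧ fibs c = P} =
      l.descFactorial P.card := by
  rw [Nat.card_congr (fiberEquiv G l P hP), Nat.card_eq_fintype_card,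
    Fintype.card_embedding_eq, Fintype.card_coe, Fintype.card_fin]


lemma card_part_le [Nonempty V] (P : Finset (Finset V)) (h1 : ∀ B ∈ P, B.Nonempty)
    (h2 : ∀ v : V, ∃! B : Finset V, B ∈ P ∧ v ∈ B) : P.card ≤ Fintype.card V := by
  have inj : Set.InjOn (fun B => if h : B ∈ P then (h1 B h).choose else Classical.arbitrary V)
      ↑P := by
    intro B hB B' hB' h
    simp only [Finset.mem_coe] at hB hB'
    simp only [dif_pos hB, dif_pos hB'] at h
    have m1 : (h1 B hB).choose ∈ B := (h1 B hB).choose_spec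
    have m2 : (h1 B' hB').choose ∈ B' := (h1 B' hB').choose_spec
    rw [h] at m1
    exact (h2 (h1 B' hB').choose).unique ⟨hB, m1⟩ ⟨hB', m2⟩
  calc P.card ≤ (Finset.univ : Finset V).card :=
        Finset.card_le_card_of_injOn _ (fun B _ => Finset.mem_univ _) inj
    _ = Fintype.card V := Finset.card_univ

lemma chromP_eq_sum (G : SimpleGraph V) [Nonempty V] (l : ℕ) :
    chromP G l = ∑ k ∈ Icc 1 (Fintype.card V), alphaPart G k * l.descFactorial k := by
  classical
  set n := Fintype.card V
  -- step 1: chromP as a sum over partitions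
  have key : chromP G l =
      ∑ P : {P : Finset (Finset V) // IsPart G P}, l.descFactorial P.1.card := by
    rw [chromP]
    let f : {c : V → Fin l // ∀ u v, G.Adj u v → c u ≠ c v} →
        {P : Finset (Finset V) // IsPart G P} := fun c => ⟨fibs c.1, isPart_fibs c.2⟩
    rw [Nat.card_eq_fintype_card, Fintype.card_congr (Equiv.sigmaFiberEquiv f).symm,
      Fintype.card_sigma]
    refine Finset.sum_congr rfl fun P _ => ?_
    have e : {x : {c : V → Fin l // ∀ u v, G.Adj u v → c u ≠ c v} // f x = P} ≃
        {c : V → Fin l // (∀ u v, G.Adj u v → c u ≠ c v) ∧ fibs c = P.1} :=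
      { toFun := fun x => ⟨x.1.1, x.1.2, congrArg Subtype.val x.2⟩
        invFun := fun y => ⟨⟨y.1, y.2.1⟩, Subtype.ext y.2.2⟩
        left_inv := fun x => by ext : 2 <;> rfl
        right_inv := fun y => rfl }
    rw [Fintype.card_congr e, ← Nat.card_eq_fintype_card, card_fiber G l P.1 P.2]
  rw [key]
  -- step 2: group the sum by the number of blocks
  have hmaps : ∀ P : {P : Finset (Finset V) // IsPart G P}, (P.1.card) ∈ Icc 1 n := by
    rintro ⟨P, h1, h2, h3⟩
    simp only [Finset.mem_Icc]
    constructor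
    · obtain ⟨B, hB, -⟩ := (h2 (Classical.arbitrary V)).exists
      exact Finset.card_pos.mpr ⟨B, hB⟩
    · exact card_part_le P h1 h2
  rw [← Finset.sum_fiberwise_of_maps_to (fun P _ => hmaps P)
    (fun P => l.descFactorial P.1.card)]
  refine Finset.sum_congr rfl fun k hk => ?_
  have : ∀ P ∈ Finset.univ.filter
      (fun P : {P : Finset (Finset V) // IsPart G P} => P.1.card = k),
      l.descFactorial P.1.card = l.descFactorial k := by
    intro P hP
    rw [(Finset.mem_filter.mp hP).2]
  rw [Finset.sum_congr rfl this, Finset.sum_const, smul_eq_mul]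
  congr 1
  rw [alphaPart, ← Fintype.card_subtype, ← Nat.card_eq_fintype_card]
  refine Nat.card_congr ?_
  exact
    { toFun := fun x => ⟨x.1.1, x.2, x.1.2⟩
      invFun := fun y => ⟨⟨y.1, y.2.2⟩, y.2.1⟩
      left_inv := fun x => rfl
      right_inv := fun y => rfl }

end Helpers

/-- For an `n`-vertex graph `G`, the mean color number
`μ(G) = (∑ k α(G,k)(n)_k)/(∑ α(G,k)(n)_k)` satisfies `μ(G) = n (1 - P(G,n-1)/P(G,n))`. -/
theorem meanColor_formula {V : Type*} [Fintype V] [Nonempty V] (G : SimpleGraph V) :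
    (∑ k ∈ Finset.Icc 1 (Fintype.card V),
        (k : ℚ) * alphaPart G k * Nat.descFactorial (Fintype.card V) k) /
      (∑ k ∈ Finset.Icc 1 (Fintype.card V),
        (alphaPart G k : ℚ) * Nat.descFactorial (Fintype.card V) k) =
    meanColor G := by
  classical
  set n := Fintype.card V with hn
  have hn1 : 1 ≤ n := Fintype.card_pos
  have hP : (chromP G n : ℚ) = ∑ k ∈ Finset.Icc 1 n, (alphaPart G k : ℚ) * n.descFactorial k := by
    rw [chromP_eq_sum G n]; push_cast; rfl
  have hQ : (chromP G (n - 1) : ℚ) =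
      ∑ k ∈ Finset.Icc 1 n, (alphaPart G k : ℚ) * (n - 1).descFactorial k := by
    rw [chromP_eq_sum G (n - 1)]; push_cast; rfl
  have hposn : 0 < chromP G n := by
    rw [chromP]
    have : Nonempty {c : V → Fin n // ∀ u v, G.Adj u v → c u ≠ c v} := by
      refine ⟨⟨(Fintype.equivFinOfCardEq hn.symm : V ≃ Fin n), ?_⟩⟩
      intro u v huv hc
      exact G.ne_of_adj huv ((Fintype.equivFinOfCardEq hn.symm).injective hc)
    exact Nat.card_pos
  have hP0 : (chromP G n : ℚ) ≠ 0 := by exact_mod_cast hposn.ne'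
  have hnum : ∑ k ∈ Finset.Icc 1 n, (k : ℚ) * alphaPart G k * n.descFactorial k =
      (n : ℚ) * chromP G n - (n : ℚ) * chromP G (n - 1) := by
    rw [hP, hQ, Finset.mul_sum, Finset.mul_sum, ← Finset.sum_sub_distrib]
    refine Finset.sum_congr rfl fun k hk => ?_
    have hk' : k ≤ n := (Finset.mem_Icc.mp hk).2
    have hnat : n * (n - 1).descFactorial k = (n - k) * n.descFactorial k := by
      obtain ⟨m, hm⟩ := Nat.exists_eq_add_of_le hn1
      rw [hm]
      calc (1 + m) * (1 + m - 1).descFactorial k = (m + 1) * m.descFactorial k := by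
            rw [Nat.add_sub_cancel_left, Nat.add_comm]
        _ = (m + 1).descFactorial (k + 1) := (Nat.succ_descFactorial_succ m k).symm
        _ = (1 + m - k) * (1 + m).descFactorial k := by
            rw [Nat.descFactorial_succ, Nat.add_comm 1 m]
    have hkey : (n : ℚ) * ((n - 1).descFactorial k : ℚ) =
        ((n : ℚ) - k) * (n.descFactorial k : ℚ) := by
      have := congrArg (fun x : ℕ => (x : ℚ)) hnat
      push_cast [Nat.cast_sub hk'] at this
      exact this
    linear_combination (alphaPart G k : ℚ) * hkey
  rw [hnum, ← hP, meanColor, ← hn]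
  field_simp
end

section
/- Let $G_0$ be a graph on $n-1$ vertices with $P(G_0,n-1)>0$, let $G=G_0\cup K_1$ with isolated vertex $w$, and let $H$ be obtained from $G$ by joining $w$ to one vertex of $G_0$. Then $\mu(G)<\mu(H)$. -/
open SimpleGraph Finset

section Aux

variable {V : Type*}

/-- Colorings of `addIsolated G` correspond to a color for `none` times a coloring of `G`. -/
def addIsolatedColEquiv (G : SimpleGraph V) (l : ℕ) :
    {c : Option V → Fin l // ∀ u v, (addIsolated G).Adj u v → c u ≠ c v} ≃
      Fin l × {c : V → Fin l // ∀ u v, G.Adj u v → c u ≠ c v} where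
  toFun c := ⟨c.1 none, fun v => c.1 (some v), by
    intro u v huv
    exact c.2 (some u) (some v) ⟨fun h => G.ne_of_adj huv (Option.some_injective _ h), u, v, huv, rfl, rfl⟩⟩
  invFun p := ⟨fun o => o.elim p.1 p.2.1, by
    rintro u v ⟨-, x, y, hxy, rfl, rfl⟩
    exact p.2.2 x y hxy⟩
  left_inv c := by
    ext o; cases o <;> rfl
  right_inv p := rfl

lemma chromP_addIsolated (G : SimpleGraph V) (l : ℕ) :
    chromP (addIsolated G) l = l * chromP G l := by
  rw [chromP, Nat.card_congr (addIsolatedColEquiv G l), Nat.card_prod, Nat.card_eq_fintype_card,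
    Fintype.card_fin, chromP]

lemma pendant_adj (G : SimpleGraph V) (a : V) (u v : Option V) :
    (pendant G a).Adj u v ↔ (∃ x y, G.Adj x y ∧ some x = u ∧ some y = v) ∨
      (u = none ∧ v = some a) ∨ (v = none ∧ u = some a) := by
  simp only [pendant, SimpleGraph.sup_adj, SimpleGraph.map_adj, SimpleGraph.fromRel_adj,
    Function.Embedding.some_apply]
  constructor
  · rintro (⟨-, x, y, hxy, rfl, rfl⟩ | ⟨hne, ⟨rfl, rfl⟩ | ⟨rfl, rfl⟩⟩)
    · exact Or.inl ⟨x, y, hxy, rfl, rfl⟩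
    · exact Or.inr (Or.inl ⟨rfl, rfl⟩)
    · exact Or.inr (Or.inr ⟨rfl, rfl⟩)
  · rintro (⟨x, y, hxy, rfl, rfl⟩ | ⟨rfl, rfl⟩ | ⟨rfl, rfl⟩)
    · exact Or.inl ⟨fun h => G.ne_of_adj hxy (Option.some_injective _ h), x, y, hxy, rfl, rfl⟩
    · exact Or.inr ⟨by simp, Or.inl ⟨rfl, rfl⟩⟩
    · exact Or.inr ⟨by simp, Or.inr ⟨rfl, rfl⟩⟩

/-- Colorings of `pendant G a` correspond to a coloring of `G` together with a color
for `none` differing from the color of `a`. -/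
def pendantColEquiv (G : SimpleGraph V) (a : V) (l : ℕ) :
    {c : Option V → Fin l // ∀ u v, (pendant G a).Adj u v → c u ≠ c v} ≃
      Σ c : {c : V → Fin l // ∀ u v, G.Adj u v → c u ≠ c v}, {x : Fin l // x ≠ c.1 a} where
  toFun c := ⟨⟨fun v => c.1 (some v), fun u v huv =>
      c.2 (some u) (some v) ((pendant_adj G a _ _).2 (Or.inl ⟨u, v, huv, rfl, rfl⟩))⟩,
    ⟨c.1 none, c.2 none (some a) ((pendant_adj G a _ _).2 (Or.inr (Or.inl ⟨rfl, rfl⟩)))⟩⟩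
  invFun p := ⟨fun o => o.elim p.2.1 p.1.1, by
    intro u v huv
    rcases (pendant_adj G a _ _).1 huv with ⟨x, y, hxy, rfl, rfl⟩ | ⟨rfl, rfl⟩ | ⟨rfl, rfl⟩
    · exact p.1.2 x y hxy
    · exact p.2.2
    · exact fun hc => p.2.2 hc.symm⟩
  left_inv c := by
    ext o; cases o <;> rfl
  right_inv p := rfl

lemma chromP_pendant [Fintype V] (G : SimpleGraph V) (a : V) (l : ℕ) :
    chromP (pendant G a) l = (l - 1) * chromP G l := by
  classical
  rcases Nat.eq_zero_or_pos l with rfl | hl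
  · have : IsEmpty {c : Option V → Fin 0 // ∀ u v, (pendant G a).Adj u v → c u ≠ c v} := by
      constructor; rintro ⟨c, -⟩; exact (c none).elim0
    simp [chromP, Nat.card_of_isEmpty]
  obtain ⟨m, rfl⟩ := Nat.exists_eq_add_of_le hl
  rw [chromP, Nat.card_congr (pendantColEquiv G a (1 + m))]
  letI : Fintype {c : V → Fin (1 + m) // ∀ u v, G.Adj u v → c u ≠ c v} := Fintype.ofFinite _
  rw [Nat.card_eq_fintype_card, Fintype.card_sigma, chromP, Nat.card_eq_fintype_card]
  have : ∀ c : {c : V → Fin (1 + m) // ∀ u v, G.Adj u v → c u ≠ c v},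
      Fintype.card {x : Fin (1 + m) // x ≠ c.1 a} = 1 + m - 1 := by
    intro c
    have := Set.card_ne_eq (c.1 a) (α := Fin (1 + m))
    simpa [Set.mem_setOf_eq] using this
  rw [Finset.sum_congr rfl fun c _ => this c, Finset.sum_const, Finset.card_univ, smul_eq_mul,
    mul_comm]

lemma chromP_pos_of_le [Fintype V] (G : SimpleGraph V) {l m : ℕ} (hlm : l ≤ m)
    (h : 0 < chromP G l) : 0 < chromP G m := by
  classical
  rw [chromP, Nat.card_pos_iff] at h ⊢
  obtain ⟨⟨⟨c, hc⟩⟩, -⟩ := h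
  refine ⟨⟨⟨fun v => Fin.castLE hlm (c v), fun u v huv hne => hc u v huv ?_⟩⟩, ?_⟩
  · exact Fin.castLE_injective hlm hne
  · infer_instance

end Aux

/-- If `G₀` has `n-1` vertices with `P(G₀,n-1) > 0`, `G = G₀ ∪ K₁`,
and `H` is obtained from `G` by joining the new vertex to one vertex of `G₀`,
then `μ(G) < μ(H)`. -/
theorem meanColor_addIsolated_lt_pendant {V : Type*} [Fintype V]
    (G₀ : SimpleGraph V) (a : V) (h : 0 < chromP G₀ (Fintype.card V)) :
    meanColor (addIsolated G₀) < meanColor (pendant G₀ a) := by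
  classical
  set n := Fintype.card V with hn
  have hn1 : 1 ≤ n := Fintype.card_pos_iff.2 ⟨a⟩
  have hcard : Fintype.card (Option V) = n + 1 := by simp [hn]
  have hB : 0 < chromP G₀ (n + 1) := chromP_pos_of_le G₀ (Nat.le_succ n) h
  have hA : 0 < chromP G₀ n := h
  rw [meanColor, meanColor, hcard]
  rw [chromP_addIsolated, chromP_addIsolated, chromP_pendant, chromP_pendant]
  simp only [Nat.add_sub_cancel]
  set A : ℚ := (chromP G₀ n : ℚ) with hAdef
  set B : ℚ := (chromP G₀ (n + 1) : ℚ) with hBdef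
  have hAQ : 0 < A := by rw [hAdef]; exact_mod_cast hA
  have hBQ : 0 < B := by rw [hBdef]; exact_mod_cast hB
  have hnQ : (1 : ℚ) ≤ (n : ℚ) := by exact_mod_cast hn1
  have hnpos : (0 : ℚ) < n := lt_of_lt_of_le one_pos hnQ
  push_cast [Nat.cast_sub hn1]
  have key : ((n : ℚ) - 1) * A / ((n : ℚ) * B) < (n : ℚ) * A / (((n : ℚ) + 1) * B) := by
    rw [div_lt_div_iff₀ (by positivity) (by positivity)]
    nlinarith [mul_pos hAQ hBQ]
  have h1 : (1 : ℚ) - (n : ℚ) * A / (((n : ℚ) + 1) * B) < 1 - ((n : ℚ) - 1) * A / ((n : ℚ) * B) :=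
    sub_lt_sub_left key 1
  exact mul_lt_mul_of_pos_left h1 (by positivity)
end

section
/- Let $G_1$ be a graph with vertices $u,v$ such that $P(G_1,\lambda)=P(G_0,\lambda)\big((\lambda-i-t)(\lambda-j)-(\lambda-k)\big)$ where $k=i+j$, and let $G_2=(G_1-v)\cup K_1$ with $P(G_2,\lambda)=P(G_0,\lambda)\,\lambda(\lambda-i-t)$. Set $n=k+s$. Then $\tau(G_1,G_2,n)=P(G_0,n)P(G_0,n-1)\big(j^3+2(s-t-1)j^2+(t^2+2t-2ts+s^2-s)j+s^2-s+(t-j)i\big)$. -/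
open SimpleGraph Finset

/-- **computation in Theorem 2.2.** If `P(G₁,λ) = P(G₀,λ)((λ-i-t)(λ-j)-(λ-k))`
with `k = i+j`, and `P(G₂,λ) = P(G₀,λ)·λ·(λ-i-t)`, then with `n = k+s`,
`τ(G₁,G₂,n) = P(G₀,n)P(G₀,n-1)(j³+2(s-t-1)j²+(t²+2t-2ts+s²-s)j+s²-s+(t-j)i)`. -/
theorem tau_G1_G2_eq {V₀ V₁ V₂ : Type*}
    (G₀ : SimpleGraph V₀) (G₁ : SimpleGraph V₁) (G₂ : SimpleGraph V₂)
    (i j t s k n : ℕ) (hi : 1 ≤ i) (hj : 1 ≤ j) (hs : 2 ≤ s)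
    (hk : k = i + j) (hn : n = k + s)
    (hP1 : ∀ l : ℕ, (chromP G₁ l : ℤ) =
      (chromP G₀ l : ℤ) * (((l : ℤ) - i - t) * ((l : ℤ) - j) - ((l : ℤ) - k)))
    (hP2 : ∀ l : ℕ, (chromP G₂ l : ℤ) =
      (chromP G₀ l : ℤ) * (l : ℤ) * ((l : ℤ) - i - t)) :
    tau G₁ G₂ n = (chromP G₀ n : ℤ) * (chromP G₀ (n - 1) : ℤ) *
      ((j : ℤ) ^ 3 + 2 * ((s : ℤ) - t - 1) * (j : ℤ) ^ 2 +
        ((t : ℤ) ^ 2 + 2 * t - 2 * t * s + (s : ℤ) ^ 2 - s) * (j : ℤ) +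
        (s : ℤ) ^ 2 - s + ((t : ℤ) - j) * i) := by
  have h1 : 1 ≤ n := by omega
  have hn1 : ((n - 1 : ℕ) : ℤ) = (n : ℤ) - 1 := by omega
  have hnn : (n : ℤ) = (i : ℤ) + j + s := by push_cast [hn, hk]; ring
  have hkk : (k : ℤ) = (i : ℤ) + j := by push_cast [hk]; ring
  unfold tau
  rw [hP1 n, hP1 (n-1), hP2 n, hP2 (n-1), hn1, hnn, hkk]
  ring
end

section
/- Let $G_1=(K_i+v)\vee(K_j+u)$ (the join of $K_i$ with an added isolated vertex $v$ and $K_j$ with an added isolated vertex $u$). If $i,j\ge 1$ and $i>(j+1)^2+1+\frac{2}{j}$, then $\mu(G_1)<\mu((G_1-v)\cup K_1)$. -/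
open SimpleGraph Finset

/-- The join `G ∨ H` of two vertex-disjoint graphs: take `G` and `H` and add all
edges between them. -/
noncomputable def graphJoin {α β : Type*} (G : SimpleGraph α) (H : SimpleGraph β) :
    SimpleGraph (α ⊕ β) :=
  SimpleGraph.fromRel (fun x y =>
    (∃ a b, x = Sum.inl a ∧ y = Sum.inl b ∧ G.Adj a b) ∨
    (∃ a b, x = Sum.inr a ∧ y = Sum.inr b ∧ H.Adj a b) ∨
    (∃ a b, x = Sum.inl a ∧ y = Sum.inr b))

/-- The graph `(Kᵢ + v) ∨ (Kⱼ + u)` of the Example: the join of `Kᵢ` plus an isolated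
vertex `v = Sum.inl none` with `Kⱼ` plus an isolated vertex `u = Sum.inr none`. -/
noncomputable def exampleG1 (i j : ℕ) :
    SimpleGraph (Option (Fin i) ⊕ Option (Fin j)) :=
  graphJoin (addIsolated (⊤ : SimpleGraph (Fin i))) (addIsolated (⊤ : SimpleGraph (Fin j)))

namespace Ex9

variable {i j l : ℕ}

abbrev V (i j : ℕ) := Option (Fin i) ⊕ Option (Fin j)

def emb (i j : ℕ) : Fin i ⊕ Fin j → V i j :=
  Sum.elim (fun a => Sum.inl (some a)) (fun b => Sum.inr (some b))

lemma g1_adj (x y : V i j) : (exampleG1 i j).Adj x y ↔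
    x ≠ y ∧ ((∃ a b : Fin i, x = .inl (some a) ∧ y = .inl (some b)) ∨
      (∃ a b : Fin j, x = .inr (some a) ∧ y = .inr (some b)) ∨
      (∃ a b, x = .inl a ∧ y = .inr b) ∨ (∃ a b, x = .inr a ∧ y = .inl b)) := by
  simp only [exampleG1, graphJoin, addIsolated, fromRel_adj, map_adj, top_adj,
    Function.Embedding.some_apply]
  constructor
  · rintro ⟨hne, hc⟩
    refine ⟨hne, ?_⟩
    rcases hc with (⟨a,b,rfl,rfl,hab⟩|⟨a,b,rfl,rfl,hab⟩|⟨a,b,rfl,rfl⟩)|(⟨a,b,rfl,rfl,hab⟩|⟨a,b,rfl,rfl,hab⟩|⟨a,b,rfl,rfl⟩)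
    · obtain ⟨_,a',b',_,rfl,rfl⟩ := hab; exact Or.inl ⟨a', b', rfl, rfl⟩
    · obtain ⟨_,a',b',_,rfl,rfl⟩ := hab; exact Or.inr (Or.inl ⟨a', b', rfl, rfl⟩)
    · exact Or.inr (Or.inr (Or.inl ⟨a, b, rfl, rfl⟩))
    · obtain ⟨_,a',b',_,rfl,rfl⟩ := hab; exact Or.inl ⟨b', a', rfl, rfl⟩
    · obtain ⟨_,a',b',_,rfl,rfl⟩ := hab; exact Or.inr (Or.inl ⟨b', a', rfl, rfl⟩)
    · exact Or.inr (Or.inr (Or.inr ⟨b, a, rfl, rfl⟩))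
  · rintro ⟨hne, (⟨a,b,rfl,rfl⟩|⟨a,b,rfl,rfl⟩|⟨a,b,rfl,rfl⟩|⟨a,b,rfl,rfl⟩)⟩
    · exact ⟨hne, Or.inl (Or.inl ⟨some a, some b, rfl, rfl, ⟨by simpa using hne, a, b, by simpa using hne, rfl, rfl⟩⟩)⟩
    · exact ⟨hne, Or.inl (Or.inr (Or.inl ⟨some a, some b, rfl, rfl, ⟨by simpa using hne, a, b, by simpa using hne, rfl, rfl⟩⟩))⟩
    · exact ⟨hne, Or.inl (Or.inr (Or.inr ⟨a, b, rfl, rfl⟩))⟩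
    · exact ⟨hne, Or.inr (Or.inr (Or.inr ⟨b, a, rfl, rfl⟩))⟩

lemma proper1_iff (c : V i j → Fin l) :
    (∀ u v, (exampleG1 i j).Adj u v → c u ≠ c v) ↔
      Function.Injective (fun s => c (emb i j s)) ∧
      (∀ b : Fin j, c (.inl none) ≠ c (.inr (some b))) ∧
      c (.inl none) ≠ c (.inr none) ∧
      (∀ a : Fin i, c (.inr none) ≠ c (.inl (some a))) := by
  constructor
  · intro hp
    refine ⟨?_, ?_, ?_, ?_⟩
    · intro s t hst
      by_contra hne
      refine hp (emb i j s) (emb i j t) ?_ hst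
      rw [g1_adj]
      refine ⟨fun he => hne ?_, ?_⟩
      · rcases s with a|b <;> rcases t with a'|b' <;> simp [emb] at he <;> simp [he]
      · rcases s with a|b <;> rcases t with a'|b'
        · exact Or.inl ⟨a, a', rfl, rfl⟩
        · exact Or.inr (Or.inr (Or.inl ⟨some a, some b', rfl, rfl⟩))
        · exact Or.inr (Or.inr (Or.inr ⟨some b, some a', rfl, rfl⟩))
        · exact Or.inr (Or.inl ⟨b, b', rfl, rfl⟩)
    · intro b
      exact hp _ _ ((g1_adj _ _).2 ⟨by simp, Or.inr (Or.inr (Or.inl ⟨none, some b, rfl, rfl⟩))⟩)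
    · exact hp _ _ ((g1_adj _ _).2 ⟨by simp, Or.inr (Or.inr (Or.inl ⟨none, none, rfl, rfl⟩))⟩)
    · intro a
      exact hp _ _ ((g1_adj _ _).2 ⟨by simp, Or.inr (Or.inr (Or.inr ⟨none, some a, rfl, rfl⟩))⟩)
  · rintro ⟨h1, h2, h3, h4⟩ x y hadj
    rw [g1_adj] at hadj
    obtain ⟨hne, hc⟩ := hadj
    rcases hc with ⟨a,b,rfl,rfl⟩|⟨a,b,rfl,rfl⟩|⟨a,b,rfl,rfl⟩|⟨a,b,rfl,rfl⟩
    · intro he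
      have := h1 (a₁ := Sum.inl a) (a₂ := Sum.inl b) he
      simp only [Sum.inl.injEq] at this
      exact hne (by rw [this])
    · intro he
      have := h1 (a₁ := Sum.inr a) (a₂ := Sum.inr b) he
      simp only [Sum.inr.injEq] at this
      exact hne (by rw [this])
    · rcases a with _|a <;> rcases b with _|b
      · exact h3
      · exact h2 b
      · exact fun he => (h4 a) he.symm
      · intro he
        exact absurd (h1 (a₁ := Sum.inl a) (a₂ := Sum.inr b) he) (by simp)
    · rcases a with _|a <;> rcases b with _|b
      · exact fun he => h3 he.symm
      · exact h4 b
      · exact fun he => (h2 a) he.symm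
      · intro he
        exact absurd (h1 (a₁ := Sum.inr a) (a₂ := Sum.inl b) he) (by simp)

def P1 (g : (Fin i ⊕ Fin j) ↪ Fin l) (xy : Fin l × Fin l) : Prop :=
  (∀ b, xy.1 ≠ g (.inr b)) ∧ xy.1 ≠ xy.2 ∧ (∀ a, xy.2 ≠ g (.inl a))

def equiv1 (i j l : ℕ) :
    {c : V i j → Fin l // ∀ u v, (exampleG1 i j).Adj u v → c u ≠ c v} ≃
    {p : ((Fin i ⊕ Fin j) ↪ Fin l) × (Fin l × Fin l) // P1 p.1 p.2} where
  toFun c := ⟨(⟨fun s => c.1 (emb i j s), ((proper1_iff c.1).1 c.2).1⟩,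
      (c.1 (.inl none), c.1 (.inr none))), by
    obtain ⟨-, h2, h3, h4⟩ := (proper1_iff c.1).1 c.2
    exact ⟨fun b => h2 b, h3, fun a => h4 a⟩⟩
  invFun p := ⟨fun z => match z with
    | .inl none => p.1.2.1
    | .inl (some a) => p.1.1 (.inl a)
    | .inr none => p.1.2.2
    | .inr (some b) => p.1.1 (.inr b), by
    rw [proper1_iff]
    obtain ⟨q1, q2, q3⟩ := p.2
    refine ⟨?_, fun b => q1 b, q2, fun a => q3 a⟩
    have he : (fun s => (fun z => match z with
        | .inl none => p.1.2.1
        | .inl (some a) => p.1.1 (.inl a)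
        | .inr none => p.1.2.2
        | .inr (some b) => p.1.1 (.inr b)) (emb i j s)) = fun s => p.1.1 s := by
      funext s; cases s <;> rfl
    rw [he]
    exact p.1.1.injective⟩
  left_inv c := Subtype.ext (funext fun z => by
    rcases z with (_|a)|(_|b) <;> rfl)
  right_inv p := Subtype.ext (by
    refine Prod.ext ?_ rfl
    apply DFunLike.ext
    intro s; cases s <;> rfl)

lemma card_pairs (g : (Fin i ⊕ Fin j) ↪ Fin l) :
    Nat.card {xy : Fin l × Fin l // P1 g xy} = (l - j) * (l - i) - (l - (j + i)) := by
  classical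
  set Cj : Finset (Fin l) := Finset.univ.image (fun b => g (.inr b)) with hCjdef
  set Ci : Finset (Fin l) := Finset.univ.image (fun a => g (.inl a)) with hCidef
  have hCj : Cj.card = j := by
    rw [hCjdef, Finset.card_image_of_injective _ (fun a b hab => Sum.inr_injective (g.injective hab))]
    simp
  have hCi : Ci.card = i := by
    rw [hCidef, Finset.card_image_of_injective _ (fun a b hab => Sum.inl_injective (g.injective hab))]
    simp
  rw [Nat.card_eq_fintype_card, Fintype.card_subtype]
  have key : Finset.univ.filter (fun xy : Fin l × Fin l => P1 g xy)
      = (Cjᶜ ×ˢ Ciᶜ).filter (fun xy => ¬ xy.1 = xy.2) := by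
    ext ⟨x, y⟩
    rw [Finset.mem_filter, Finset.mem_filter]
    simp only [P1, Finset.mem_filter, Finset.mem_univ, true_and, Finset.mem_product,
      Finset.mem_compl, Finset.mem_image, hCjdef, hCidef, not_exists]
    constructor
    · rintro ⟨h1, h2, h3⟩
      exact ⟨⟨fun b he => h1 b he.symm, fun a he => h3 a he.symm⟩, h2⟩
    · rintro ⟨⟨h1, h3⟩, h2⟩
      exact ⟨fun b he => h1 b he.symm, h2, fun a he => h3 a he.symm⟩
  rw [key]
  have split := Finset.card_filter_add_card_filter_not
    (s := Cjᶜ ×ˢ Ciᶜ) (p := fun xy : Fin l × Fin l => xy.1 = xy.2)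
  have diag : (Cjᶜ ×ˢ Ciᶜ).filter (fun xy : Fin l × Fin l => xy.1 = xy.2)
      = (Cjᶜ ∩ Ciᶜ).image (fun x => (x, x)) := by
    ext ⟨x, y⟩
    simp only [Finset.mem_filter, Finset.mem_product, Finset.mem_image, Finset.mem_inter]
    constructor
    · rintro ⟨⟨hx, hy⟩, rfl⟩
      exact ⟨x, ⟨hx, hy⟩, rfl⟩
    · rintro ⟨z, ⟨hz1, hz2⟩, he⟩
      obtain ⟨rfl, rfl⟩ := Prod.mk.injEq .. ▸ he
      simp only [Prod.mk.injEq] at he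
      exact ⟨⟨hz1, hz2⟩, rfl⟩
  have hdiagcard : ((Cjᶜ ×ˢ Ciᶜ).filter (fun xy : Fin l × Fin l => xy.1 = xy.2)).card
      = l - (j + i) := by
    rw [diag, Finset.card_image_of_injective _ (fun a b hab => (Prod.mk.injEq .. ▸ hab).1),
      ← Finset.compl_union, Finset.card_compl,
      Finset.card_union_of_disjoint, hCj, hCi]
    · simp
    · rw [Finset.disjoint_left]
      rintro x hx hy
      simp only [hCjdef, hCidef, Finset.mem_image, Finset.mem_univ, true_and] at hx hy
      obtain ⟨b, rfl⟩ := hx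
      obtain ⟨a, ha⟩ := hy
      exact absurd (g.injective ha) (by simp)
  have htot : (Cjᶜ ×ˢ Ciᶜ).card = (l - j) * (l - i) := by
    rw [Finset.card_product, Finset.card_compl, Finset.card_compl, hCj, hCi]
    simp
  refine Nat.eq_sub_of_add_eq ?_
  rw [← hdiagcard, ← htot, ← split, add_comm]

lemma chromP1 (i j l : ℕ) : chromP (exampleG1 i j) l
    = l.descFactorial (i + j) * ((l - j) * (l - i) - (l - (j + i))) := by
  classical
  rw [chromP, Nat.card_congr ((equiv1 i j l).trans (Equiv.subtypeProdEquivSigmaSubtype P1)),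
    Nat.card_eq_fintype_card, Fintype.card_sigma]
  have : ∀ g : (Fin i ⊕ Fin j) ↪ Fin l,
      Fintype.card {xy : Fin l × Fin l // P1 g xy} = (l - j) * (l - i) - (l - (j + i)) := by
    intro g
    rw [← Nat.card_eq_fintype_card, card_pairs]
  rw [Finset.sum_congr rfl (fun g _ => this g), Finset.sum_const, Finset.card_univ,
    Fintype.card_embedding_eq, smul_eq_mul]
  congr 1
  simp

abbrev S (i j : ℕ) : Set (V i j) := {x | x ≠ Sum.inl none}

lemma emb_mem (s : Fin i ⊕ Fin j) : emb i j s ∈ S i j := by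
  cases s <;> simp [emb, S]

lemma inr_none_mem : (Sum.inr none : V i j) ∈ S i j := by simp [S]

noncomputable abbrev G2 (i j : ℕ) : SimpleGraph (Option ↥(S i j)) :=
  addIsolated ((exampleG1 i j).induce (S i j))

lemma proper2_iff (c : Option ↥(S i j) → Fin l) :
    (∀ u v, (G2 i j).Adj u v → c u ≠ c v) ↔
      Function.Injective (fun s => c (some ⟨emb i j s, emb_mem s⟩)) ∧
      (∀ a : Fin i, c (some ⟨Sum.inr none, inr_none_mem⟩) ≠ c (some ⟨emb i j (.inl a), emb_mem _⟩)) := by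
  constructor
  · intro hp
    constructor
    · intro s t hst
      by_contra hne
      refine hp _ _ ?_ hst
      rw [G2, addIsolated, map_adj]
      refine ⟨⟨emb i j s, emb_mem s⟩, ⟨emb i j t, emb_mem t⟩, ?_, rfl, rfl⟩
      rw [comap_adj]
      rw [g1_adj]
      refine ⟨fun he => hne ?_, ?_⟩
      · rcases s with a|b <;> rcases t with a'|b' <;> simp [emb] at he <;> simp [he]
      · rcases s with a|b <;> rcases t with a'|b'
        · exact Or.inl ⟨a, a', rfl, rfl⟩
        · exact Or.inr (Or.inr (Or.inl ⟨some a, some b', rfl, rfl⟩))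
        · exact Or.inr (Or.inr (Or.inr ⟨some b, some a', rfl, rfl⟩))
        · exact Or.inr (Or.inl ⟨b, b', rfl, rfl⟩)
    · intro a
      refine hp _ _ ?_
      rw [G2, addIsolated, map_adj]
      refine ⟨⟨Sum.inr none, inr_none_mem⟩, ⟨emb i j (.inl a), emb_mem _⟩, ?_, rfl, rfl⟩
      rw [comap_adj, g1_adj]
      exact ⟨by simp [emb], Or.inr (Or.inr (Or.inr ⟨none, some a, rfl, rfl⟩))⟩
  · rintro ⟨h1, h2⟩ x y hadj
    rw [G2, addIsolated, map_adj] at hadj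
    obtain ⟨⟨w1, hw1⟩, ⟨w2, hw2⟩, hadj, rfl, rfl⟩ := hadj
    rw [comap_adj, g1_adj] at hadj
    obtain ⟨hne, hc⟩ := hadj
    simp only [S, Set.mem_setOf_eq] at hw1 hw2
    rcases hc with ⟨a,b,he1,he2⟩|⟨a,b,he1,he2⟩|⟨a,b,he1,he2⟩|⟨a,b,he1,he2⟩
    · subst he1; subst he2
      intro he
      have := h1 (a₁ := Sum.inl a) (a₂ := Sum.inl b) he
      simp only [Sum.inl.injEq] at this
      subst this
      exact hne rfl
    · subst he1; subst he2
      intro he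
      have := h1 (a₁ := Sum.inr a) (a₂ := Sum.inr b) he
      simp only [Sum.inr.injEq] at this
      subst this
      exact hne rfl
    · subst he1; subst he2
      rcases a with _|a
      · exact absurd rfl hw1
      · rcases b with _|b
        · exact fun he => h2 a he.symm
        · intro he
          exact absurd (h1 (a₁ := Sum.inl a) (a₂ := Sum.inr b) he) (by simp)
    · subst he1; subst he2
      rcases b with _|b
      · exact absurd rfl hw2
      · rcases a with _|a
        · exact h2 b
        · intro he
          exact absurd (h1 (a₁ := Sum.inr a) (a₂ := Sum.inl b) he) (by simp)

def build2 (g : (Fin i ⊕ Fin j) ↪ Fin l) (w y : Fin l) : Option ↥(S i j) → Fin l :=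
  fun z => match z with
    | none => w
    | some ⟨Sum.inl none, _⟩ => w
    | some ⟨Sum.inl (some a), _⟩ => g (.inl a)
    | some ⟨Sum.inr none, _⟩ => y
    | some ⟨Sum.inr (some b), _⟩ => g (.inr b)

lemma build2_emb (g : (Fin i ⊕ Fin j) ↪ Fin l) (w y : Fin l) (s : Fin i ⊕ Fin j) :
    build2 g w y (some ⟨emb i j s, emb_mem s⟩) = g s := by
  cases s <;> rfl

def P2 (g : (Fin i ⊕ Fin j) ↪ Fin l) (y : Fin l) : Prop :=
  ∀ a : Fin i, y ≠ g (.inl a)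

def equiv2 (i j l : ℕ) :
    {c : Option ↥(S i j) → Fin l // ∀ u v, (G2 i j).Adj u v → c u ≠ c v} ≃
    Fin l × {p : ((Fin i ⊕ Fin j) ↪ Fin l) × Fin l // P2 p.1 p.2} where
  toFun c := (c.1 none, ⟨(⟨fun s => c.1 (some ⟨emb i j s, emb_mem s⟩),
      ((proper2_iff c.1).1 c.2).1⟩, c.1 (some ⟨Sum.inr none, inr_none_mem⟩)),
      fun a => ((proper2_iff c.1).1 c.2).2 a⟩)
  invFun p := ⟨build2 p.2.1.1 p.1 p.2.1.2, by
    rw [proper2_iff]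
    refine ⟨?_, fun a => p.2.2 a⟩
    have he : (fun s => build2 p.2.1.1 p.1 p.2.1.2 (some ⟨emb i j s, emb_mem s⟩))
        = fun s => p.2.1.1 s := funext fun s => build2_emb _ _ _ s
    rw [he]
    exact p.2.1.1.injective⟩
  left_inv c := Subtype.ext (funext fun z => by
    rcases z with _|⟨(_|a)|(_|b), hz⟩
    · rfl
    · exact absurd rfl hz
    · rfl
    · rfl
    · rfl)
  right_inv p := by
    refine Prod.ext rfl (Subtype.ext (Prod.ext ?_ rfl))
    apply DFunLike.ext
    intro s
    exact build2_emb _ _ _ s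

lemma card_P2 (g : (Fin i ⊕ Fin j) ↪ Fin l) :
    Nat.card {y : Fin l // P2 g y} = l - i := by
  classical
  rw [Nat.card_eq_fintype_card, Fintype.card_subtype]
  have key : Finset.univ.filter (fun y : Fin l => P2 g y)
      = (Finset.univ.image (fun a => g (.inl a)))ᶜ := by
    ext x
    rw [Finset.mem_filter]
    simp only [P2, Finset.mem_filter, Finset.mem_univ, true_and, Finset.mem_compl,
      Finset.mem_image, not_exists]
    constructor
    · intro h1 a he
      exact h1 a he.symm
    · intro h1 a he
      exact h1 a he.symm
  rw [key, Finset.card_compl,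
    Finset.card_image_of_injective _ (fun a b hab => Sum.inl_injective (g.injective hab))]
  simp

lemma chromP2 (i j l : ℕ) : chromP (G2 i j) l
    = l * (l.descFactorial (i + j) * (l - i)) := by
  classical
  rw [chromP, Nat.card_congr ((equiv2 i j l).trans
    (Equiv.prodCongr (Equiv.refl _) (Equiv.subtypeProdEquivSigmaSubtype P2))),
    Nat.card_eq_fintype_card, Fintype.card_prod, Fintype.card_fin, Fintype.card_sigma]
  congr 1
  have : ∀ g : (Fin i ⊕ Fin j) ↪ Fin l,
      Fintype.card {y : Fin l // P2 g y} = l - i := by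
    intro g
    rw [← Nat.card_eq_fintype_card, card_P2]
  rw [Finset.sum_congr rfl (fun g _ => this g), Finset.sum_const, Finset.card_univ,
    Fintype.card_embedding_eq, smul_eq_mul]
  congr 1
  simp

lemma cardS : Fintype.card ↥(S i j) = i + j + 1 := by
  rw [Fintype.card_congr (Equiv.subtypeEquivRight
    (q := fun x : V i j => ¬ (x = Sum.inl none)) (fun x => by simp [S]))]
  rw [Fintype.card_subtype_compl, Fintype.card_subtype_eq]
  simp [Fintype.card_sum, Fintype.card_option]
  omega

end Ex9

open Ex9

/-- **Example, first part.** Let `G₁ = (Kᵢ + v) ∨ (Kⱼ + u)`. If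
`i, j ≥ 1` and `i > (j+1)² + 1 + 2/j`, then `μ(G₁) < μ((G₁ - v) ∪ K₁)`. -/
theorem example_counterexample_conj2 (i j : ℕ) (hi : 1 ≤ i) (hj : 1 ≤ j)
    (h : ((j : ℚ) + 1) ^ 2 + 1 + 2 / (j : ℚ) < (i : ℚ)) :
    meanColor (exampleG1 i j) <
      meanColor (addIsolated ((exampleG1 i j).induce {x | x ≠ Sum.inl none})) := by
  have hD : 0 < (i + j + 2).descFactorial (i + j) := by
    apply Nat.pos_of_ne_zero
    rw [Ne, Nat.descFactorial_eq_zero_iff_lt]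
    omega
  have hD' : 0 < (i + j + 1).descFactorial (i + j) := by
    apply Nat.pos_of_ne_zero
    rw [Ne, Nat.descFactorial_eq_zero_iff_lt]
    omega
  have hA1 : chromP (exampleG1 i j) (i + j + 1)
      = (i + j + 1).descFactorial (i + j) * (i * j + i + j) := by
    rw [chromP1, show i+j+1-j = i+1 from by omega, show i+j+1-i = j+1 from by omega,
      show i+j+1-(j+i) = 1 from by omega]
    congr 1
    have : (i+1)*(j+1) = i*j+i+j+1 := by ring
    omega
  have hB1 : chromP (exampleG1 i j) (i + j + 2)
      = (i + j + 2).descFactorial (i + j) * (i * j + 2 * i + 2 * j + 2) := by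
    rw [chromP1, show i+j+2-j = i+2 from by omega, show i+j+2-i = j+2 from by omega,
      show i+j+2-(j+i) = 2 from by omega]
    congr 1
    have : (i+2)*(j+2) = i*j+2*i+2*j+4 := by ring
    omega
  have hA2 : chromP (G2 i j) (i + j + 1)
      = (i + j + 1) * ((i + j + 1).descFactorial (i + j) * (j + 1)) := by
    rw [chromP2, show i+j+1-i = j+1 from by omega]
  have hB2 : chromP (G2 i j) (i + j + 2)
      = (i + j + 2) * ((i + j + 2).descFactorial (i + j) * (j + 2)) := by
    rw [chromP2, show i+j+2-i = j+2 from by omega]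
  unfold meanColor
  have hc1 : Fintype.card (Option (Fin i) ⊕ Option (Fin j)) = i + j + 2 := by
    simp [Fintype.card_sum, Fintype.card_option]
    omega
  have hc2 : Fintype.card (Option ↥(S i j)) = i + j + 2 := by
    rw [Fintype.card_option, cardS]
  rw [hc1, hc2, show i + j + 2 - 1 = i + j + 1 from by omega]
  rw [hA1, hB1]
  rw [show (chromP (addIsolated ((exampleG1 i j).induce {x | x ≠ Sum.inl none})) (i+j+1)) = chromP (G2 i j) (i+j+1) from rfl,
    show (chromP (addIsolated ((exampleG1 i j).induce {x | x ≠ Sum.inl none})) (i+j+2)) = chromP (G2 i j) (i+j+2) from rfl,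
    hA2, hB2]
  have hj0 : (0:ℚ) < (j:ℚ) := by positivity
  have hDq : (0:ℚ) < ((i + j + 2).descFactorial (i + j) : ℚ) := by exact_mod_cast hD
  have hD'q : (0:ℚ) < ((i + j + 1).descFactorial (i + j) : ℚ) := by exact_mod_cast hD'
  apply mul_lt_mul_of_pos_left _ (by positivity)
  apply sub_lt_sub_left
  rw [div_lt_div_iff₀ (by positivity) (by positivity)]
  push_cast
  have key : (j:ℚ)^3 + 2*(j:ℚ)^2 + 2*(j:ℚ) + 2 < (i:ℚ)*(j:ℚ) := by
    have h2 : ((j:ℚ)+1)^2*(j:ℚ) + (j:ℚ) + 2 < (i:ℚ)*(j:ℚ) := by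
      have h3 := mul_lt_mul_of_pos_right h hj0
      have h4 : 2/(j:ℚ)*(j:ℚ) = 2 := div_mul_cancel₀ _ (ne_of_gt hj0)
      nlinarith [h3, h4]
    nlinarith [h2]
  set D : ℚ := ((i + j + 2).descFactorial (i + j) : ℚ)
  set D' : ℚ := ((i + j + 1).descFactorial (i + j) : ℚ)
  have H := mul_lt_mul_of_pos_left key (mul_pos hDq hD'q)
  nlinarith [H]
end

section
/- Let $G_1=(K_i+v)\vee(K_j+u)$ with $i,j\ge 1$ and $i>(j+1)^2+1+\frac{2}{j}$, and let $G_3$ be obtained from $G_1$ by deleting all but one of the edges incident to $v$. Then $\mu(G_1)<\mu(G_3)$. -/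
open SimpleGraph Finset

namespace Conj3Aux

open Function

abbrev Vtx (i j : ℕ) := Option (Fin i) ⊕ Option (Fin j)

def embed2 (i j : ℕ) : Fin i ⊕ Fin j → Vtx i j := Sum.map some some

lemma adj1_iff {i j : ℕ} (x y : Vtx i j) :
    (exampleG1 i j).Adj x y ↔
      (∃ a b : Fin i, a ≠ b ∧ x = .inl (some a) ∧ y = .inl (some b)) ∨
      (∃ a b : Fin j, a ≠ b ∧ x = .inr (some a) ∧ y = .inr (some b)) ∨
      (∃ a b, x = .inl a ∧ y = .inr b) ∨ (∃ a b, x = .inr a ∧ y = .inl b) := by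
  simp only [exampleG1, graphJoin, addIsolated, SimpleGraph.fromRel_adj, SimpleGraph.map_adj,
    SimpleGraph.top_adj, Function.Embedding.some_apply]
  constructor
  · rintro ⟨hne, h | h⟩ <;>
      rcases h with ⟨a,b,rfl,rfl,-,c,d,hcd,rfl,rfl⟩|⟨a,b,rfl,rfl,-,c,d,hcd,rfl,rfl⟩|⟨a,b,rfl,rfl⟩ <;>
      [ exact Or.inl ⟨c,d,hcd,rfl,rfl⟩;
        exact Or.inr (Or.inl ⟨c,d,hcd,rfl,rfl⟩);
        exact Or.inr (Or.inr (Or.inl ⟨a,b,rfl,rfl⟩));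
        exact Or.inl ⟨d,c,Ne.symm hcd,rfl,rfl⟩;
        exact Or.inr (Or.inl ⟨d,c,Ne.symm hcd,rfl,rfl⟩);
        exact Or.inr (Or.inr (Or.inr ⟨b,a,rfl,rfl⟩))]
  · rintro (⟨a,b,hab,rfl,rfl⟩|⟨a,b,hab,rfl,rfl⟩|⟨a,b,rfl,rfl⟩|⟨a,b,rfl,rfl⟩)
    · exact ⟨by simp [hab], Or.inl (Or.inl ⟨some a, some b, rfl, rfl, (Option.some_injective _).ne hab, a, b, hab, rfl, rfl⟩)⟩
    · exact ⟨by simp [hab], Or.inl (Or.inr (Or.inl ⟨some a, some b, rfl, rfl, (Option.some_injective _).ne hab, a, b, hab, rfl, rfl⟩))⟩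
    · exact ⟨by simp, Or.inl (Or.inr (Or.inr ⟨a, b, rfl, rfl⟩))⟩
    · exact ⟨by simp, Or.inr (Or.inr (Or.inr ⟨b, a, rfl, rfl⟩))⟩

lemma proper1_iff {i j l : ℕ} (c : Vtx i j → Fin l) :
    (∀ x y, (exampleG1 i j).Adj x y → c x ≠ c y) ↔
      (Injective fun s : Fin i ⊕ Fin j => c (embed2 i j s)) ∧
      (∀ b : Fin j, c (.inl none) ≠ c (.inr (some b))) ∧
      (∀ a : Fin i, c (.inr none) ≠ c (.inl (some a))) ∧
      c (.inl none) ≠ c (.inr none) := by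
  constructor
  · intro H
    refine ⟨?_, ?_, ?_, ?_⟩
    · rintro (a|a) (b|b) hab
      · by_cases hne : a = b
        · rw [hne]
        · exact absurd hab (H _ _ ((adj1_iff _ _).mpr (Or.inl ⟨a, b, hne, rfl, rfl⟩)))
      · exact absurd hab (H _ _ ((adj1_iff _ _).mpr (Or.inr (Or.inr (Or.inl ⟨some a, some b, rfl, rfl⟩)))))
      · exact absurd hab (H _ _ ((adj1_iff _ _).mpr (Or.inr (Or.inr (Or.inr ⟨some a, some b, rfl, rfl⟩)))))
      · by_cases hne : a = b
        · rw [hne]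
        · exact absurd hab (H _ _ ((adj1_iff _ _).mpr (Or.inr (Or.inl ⟨a, b, hne, rfl, rfl⟩))))
    · intro b
      exact H _ _ ((adj1_iff _ _).mpr (Or.inr (Or.inr (Or.inl ⟨none, some b, rfl, rfl⟩))))
    · intro a
      exact H _ _ ((adj1_iff _ _).mpr (Or.inr (Or.inr (Or.inr ⟨none, some a, rfl, rfl⟩))))
    · exact H _ _ ((adj1_iff _ _).mpr (Or.inr (Or.inr (Or.inl ⟨none, none, rfl, rfl⟩))))
  · rintro ⟨h1, h2, h3, h4⟩ x y hadj
    rcases (adj1_iff x y).mp hadj with ⟨a,b,hab,rfl,rfl⟩|⟨a,b,hab,rfl,rfl⟩|⟨a,b,rfl,rfl⟩|⟨a,b,rfl,rfl⟩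
    · exact fun e => hab (Sum.inl_injective (h1 (a₁ := Sum.inl a) (a₂ := Sum.inl b) e))
    · exact fun e => hab (Sum.inr_injective (h1 (a₁ := Sum.inr a) (a₂ := Sum.inr b) e))
    · match a, b with
      | none, none => exact h4
      | none, some b => exact h2 b
      | some a, none => exact (h3 a).symm
      | some a, some b =>
          exact fun e => absurd (h1 (a₁ := Sum.inl a) (a₂ := Sum.inr b) e) (by simp)
    · match a, b with
      | none, none => exact h4.symm
      | none, some b => exact h3 b
      | some a, none => exact (h2 a).symm
      | some a, some b =>
          exact fun e => absurd (h1 (a₁ := Sum.inr a) (a₂ := Sum.inl b) e) (by simp)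


def recol {i j l : ℕ} (φ : Fin i ⊕ Fin j → Fin l) (x y : Fin l) : Vtx i j → Fin l
  | .inl none => x
  | .inl (some a) => φ (.inl a)
  | .inr none => y
  | .inr (some b) => φ (.inr b)

lemma recol_embed2 {i j l : ℕ} (φ : Fin i ⊕ Fin j → Fin l) (x y : Fin l) :
    (fun s => recol φ x y (embed2 i j s)) = φ := by
  funext s; rcases s with a | b <;> rfl

def P1 {i j l : ℕ} (φ : Fin i ⊕ Fin j ↪ Fin l) (p : Fin l × Fin l) : Prop :=
  (∀ b : Fin j, p.1 ≠ φ (.inr b)) ∧ (∀ a : Fin i, p.2 ≠ φ (.inl a)) ∧ p.1 ≠ p.2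

def equiv1 (i j l : ℕ) :
    {c : Vtx i j → Fin l // ∀ x y, (exampleG1 i j).Adj x y → c x ≠ c y} ≃
    {q : ((Fin i ⊕ Fin j) ↪ Fin l) × (Fin l × Fin l) // P1 q.1 q.2} where
  toFun c := ⟨⟨⟨fun s => c.1 (embed2 i j s), ((proper1_iff c.1).mp c.2).1⟩,
      (c.1 (.inl none), c.1 (.inr none))⟩, by
    obtain ⟨h1, h2, h3, h4⟩ := (proper1_iff c.1).mp c.2
    exact ⟨h2, h3, h4⟩⟩
  invFun q := ⟨recol q.1.1 q.1.2.1 q.1.2.2, by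
    refine (proper1_iff _).mpr ⟨?_, q.2.1, q.2.2.1, q.2.2.2⟩
    rw [recol_embed2]
    exact q.1.1.injective⟩
  left_inv c := by
    apply Subtype.ext
    funext w
    rcases w with (_|a) | (_|b) <;> rfl
  right_inv q := by
    apply Subtype.ext
    obtain ⟨⟨φ, x, y⟩, hq⟩ := q
    refine Prod.ext ?_ rfl
    exact DFunLike.ext _ _ fun s => by rcases s with a | b <;> rfl

lemma pair_count1 (l : ℕ) (S T : Finset (Fin l)) (hST : Disjoint S T) :
    Nat.card {p : Fin l × Fin l // p.1 ∉ S ∧ p.2 ∉ T ∧ p.1 ≠ p.2} =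
      (l - S.card) * (l - T.card) - (l - (S.card + T.card)) := by
  classical
  rw [Nat.card_eq_fintype_card, Fintype.card_subtype]
  have hsub : ((Sᶜ ∩ Tᶜ).image fun x => (x, x)) ⊆ Sᶜ ×ˢ Tᶜ := by
    intro p hp
    simp only [mem_image, mem_inter, mem_compl] at hp
    obtain ⟨x, ⟨hx1, hx2⟩, rfl⟩ := hp
    simp [mem_product, hx1, hx2]
  have hset : (univ.filter fun p : Fin l × Fin l => p.1 ∉ S ∧ p.2 ∉ T ∧ p.1 ≠ p.2)
      = (Sᶜ ×ˢ Tᶜ) \ ((Sᶜ ∩ Tᶜ).image fun x => (x, x)) := by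
    ext p
    simp only [mem_filter, mem_univ, true_and, mem_sdiff, mem_product, mem_compl,
      mem_image, mem_inter, not_exists]
    obtain ⟨p1, p2⟩ := p
    constructor
    · rintro ⟨h1, h2, h3⟩
      exact ⟨⟨h1, h2⟩, fun x hx => h3 (by rw [← hx.2])⟩
    · rintro ⟨⟨h1, h2⟩, h3⟩
      refine ⟨h1, h2, fun e => h3 p1 ⟨⟨h1, by simp only at e; rw [e]; exact h2⟩, by simp only at e; rw [e]⟩⟩
  rw [hset, card_sdiff_of_subset hsub, card_product, card_image_of_injective _
    (fun a b e => (Prod.mk.injEq _ _ _ _ ▸ e : _ ∧ _).1),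
    ← compl_union, card_compl, card_compl, card_compl, card_union_of_disjoint hST,
    Fintype.card_fin]

lemma disjoint_ranges {i j l : ℕ} (φ : Fin i ⊕ Fin j ↪ Fin l) :
    Disjoint (univ.image fun b : Fin j => φ (.inr b))
      (univ.image fun a : Fin i => φ (.inl a)) := by
  rw [Finset.disjoint_left]
  intro x hx hx'
  simp only [mem_image, mem_univ, true_and] at hx hx'
  obtain ⟨b, rfl⟩ := hx
  obtain ⟨a, ha⟩ := hx'
  exact absurd (φ.injective ha) (by simp)

lemma chromP_G1 (i j l : ℕ) :
    chromP (exampleG1 i j) l =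
      l.descFactorial (i + j) * ((l - j) * (l - i) - (l - (j + i))) := by
  classical
  have e := (equiv1 i j l).trans (Equiv.subtypeProdEquivSigmaSubtype (P1 (i := i) (j := j) (l := l)))
  rw [chromP, Nat.card_congr e, Nat.card_eq_fintype_card, Fintype.card_sigma]
  have hfib : ∀ φ : (Fin i ⊕ Fin j) ↪ Fin l,
      Fintype.card {p : Fin l × Fin l // P1 φ p} = (l - j) * (l - i) - (l - (j + i)) := by
    intro φ
    set S : Finset (Fin l) := univ.image fun b : Fin j => φ (.inr b) with hS
    set T : Finset (Fin l) := univ.image fun a : Fin i => φ (.inl a) with hT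
    have hScard : S.card = j := by
      rw [hS, card_image_of_injective _ (fun a b e => Sum.inr_injective (φ.injective e)),
        card_univ, Fintype.card_fin]
    have hTcard : T.card = i := by
      rw [hT, card_image_of_injective _ (fun a b e => Sum.inl_injective (φ.injective e)),
        card_univ, Fintype.card_fin]
    have := pair_count1 l S T (disjoint_ranges φ)
    rw [hScard, hTcard] at this
    rw [← Nat.card_eq_fintype_card, ← this]
    apply Nat.card_congr
    apply Equiv.subtypeEquivRight
    intro p
    simp [P1, hS, hT, @eq_comm (Fin l)]
  calc (∑ φ : (Fin i ⊕ Fin j) ↪ Fin l, Fintype.card {p : Fin l × Fin l // P1 φ p})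
      = ∑ _φ : (Fin i ⊕ Fin j) ↪ Fin l, ((l - j) * (l - i) - (l - (j + i))) :=
        Finset.sum_congr rfl fun φ _ => hfib φ
    _ = Fintype.card ((Fin i ⊕ Fin j) ↪ Fin l) * ((l - j) * (l - i) - (l - (j + i))) := by
        rw [Finset.sum_const, card_univ, smul_eq_mul]
    _ = l.descFactorial (i + j) * ((l - j) * (l - i) - (l - (j + i))) := by
        rw [Fintype.card_embedding_eq]
        simp [Fintype.card_sum]


lemma adj1_embed2 {i j : ℕ} {s t : Fin i ⊕ Fin j} (h : s ≠ t) :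
    (exampleG1 i j).Adj (embed2 i j s) (embed2 i j t) := by
  apply (adj1_iff _ _).mpr
  rcases s with a | a <;> rcases t with b | b
  · exact Or.inl ⟨a, b, fun e => h (by rw [e]), rfl, rfl⟩
  · exact Or.inr (Or.inr (Or.inl ⟨some a, some b, rfl, rfl⟩))
  · exact Or.inr (Or.inr (Or.inr ⟨some a, some b, rfl, rfl⟩))
  · exact Or.inr (Or.inl ⟨a, b, fun e => h (by rw [e]), rfl, rfl⟩)

lemma proper3_iff {i j l : ℕ} (w : Option (Fin j)) (c : Vtx i j → Fin l) :
    (∀ x y, ((exampleG1 i j).deleteEdges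
        {e | Sum.inl none ∈ e ∧ e ≠ s(Sum.inl none, Sum.inr w)}).Adj x y → c x ≠ c y) ↔
      (Injective fun s : Fin i ⊕ Fin j => c (embed2 i j s)) ∧
      (∀ a : Fin i, c (.inr none) ≠ c (.inl (some a))) ∧
      c (.inl none) ≠ c (.inr w) := by
  constructor
  · intro H
    refine ⟨?_, ?_, ?_⟩
    · intro s t e
      by_contra hne
      refine H _ _ ((SimpleGraph.deleteEdges_adj).mpr ⟨adj1_embed2 hne, ?_⟩) e
      rintro ⟨hmem, -⟩
      rw [Sym2.mem_iff] at hmem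
      rcases hmem with hm | hm
      · rcases s with a | a <;> simp [embed2] at hm
      · rcases t with a | a <;> simp [embed2] at hm
    · intro a
      refine H _ _ ((SimpleGraph.deleteEdges_adj).mpr
        ⟨(adj1_iff _ _).mpr (Or.inr (Or.inr (Or.inr ⟨none, some a, rfl, rfl⟩))), ?_⟩)
      rintro ⟨hmem, -⟩
      rw [Sym2.mem_iff] at hmem
      rcases hmem with hm | hm <;> simp at hm
    · refine H _ _ ((SimpleGraph.deleteEdges_adj).mpr
        ⟨(adj1_iff _ _).mpr (Or.inr (Or.inr (Or.inl ⟨none, w, rfl, rfl⟩))), ?_⟩)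
      rintro ⟨-, hne⟩
      exact hne rfl
  · rintro ⟨h1, h2, h3⟩ x y hAdj
    rw [SimpleGraph.deleteEdges_adj] at hAdj
    obtain ⟨hadj, hdel⟩ := hAdj
    simp only [Set.mem_setOf_eq, not_and, not_not] at hdel
    rcases (adj1_iff x y).mp hadj with ⟨a,b,hab,rfl,rfl⟩|⟨a,b,hab,rfl,rfl⟩|⟨a,b,rfl,rfl⟩|⟨a,b,rfl,rfl⟩
    · exact fun e => hab (Sum.inl_injective (h1 (a₁ := Sum.inl a) (a₂ := Sum.inl b) e))
    · exact fun e => hab (Sum.inr_injective (h1 (a₁ := Sum.inr a) (a₂ := Sum.inr b) e))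
    · match a, b with
      | some a, some b =>
          exact fun e => absurd (h1 (a₁ := Sum.inl a) (a₂ := Sum.inr b) e) (by simp)
      | some a, none => exact (h2 a).symm
      | none, b =>
          have heq := hdel (by rw [Sym2.mem_iff]; exact Or.inl rfl)
          rw [Sym2.eq_iff] at heq
          rcases heq with ⟨-, hb⟩ | ⟨hb, -⟩
          · obtain rfl : b = w := Sum.inr_injective hb
            exact h3
          · exact absurd hb (by simp)
    · match a, b with
      | some a, some b =>
          exact fun e => absurd (h1 (a₁ := Sum.inr a) (a₂ := Sum.inl b) e) (by simp)
      | none, some b => exact h2 b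
      | a, none =>
          have heq := hdel (by rw [Sym2.mem_iff]; exact Or.inr rfl)
          rw [Sym2.eq_iff] at heq
          rcases heq with ⟨ha, -⟩ | ⟨ha, -⟩
          · exact absurd ha (by simp)
          · obtain rfl : a = w := Sum.inr_injective ha
            exact h3.symm

def P3 {i j l : ℕ} (w : Option (Fin j)) (φ : Fin i ⊕ Fin j ↪ Fin l) (p : Fin l × Fin l) : Prop :=
  (∀ a : Fin i, p.2 ≠ φ (.inl a)) ∧ p.1 ≠ w.elim p.2 (fun b => φ (.inr b))

lemma recol_inr {i j l : ℕ} (φ : Fin i ⊕ Fin j → Fin l) (x y : Fin l) (w : Option (Fin j)) :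
    recol φ x y (.inr w) = w.elim y (fun b => φ (.inr b)) := by
  cases w <;> rfl

lemma apply_inr_elim {i j l : ℕ} (c : Vtx i j → Fin l) (w : Option (Fin j)) :
    c (.inr w) = w.elim (c (.inr none)) (fun b => c (embed2 i j (.inr b))) := by
  cases w <;> rfl

def equiv3 (i j l : ℕ) (w : Option (Fin j)) :
    {c : Vtx i j → Fin l // ∀ x y, ((exampleG1 i j).deleteEdges
        {e | Sum.inl none ∈ e ∧ e ≠ s(Sum.inl none, Sum.inr w)}).Adj x y → c x ≠ c y} ≃
    {q : ((Fin i ⊕ Fin j) ↪ Fin l) × (Fin l × Fin l) // P3 w q.1 q.2} where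
  toFun c := ⟨⟨⟨fun s => c.1 (embed2 i j s), ((proper3_iff w c.1).mp c.2).1⟩,
      (c.1 (.inl none), c.1 (.inr none))⟩, by
    obtain ⟨h1, h2, h3⟩ := (proper3_iff w c.1).mp c.2
    refine ⟨h2, ?_⟩
    have := h3
    rw [apply_inr_elim c.1 w] at this
    exact this⟩
  invFun q := ⟨recol q.1.1 q.1.2.1 q.1.2.2, by
    refine (proper3_iff w _).mpr ⟨?_, q.2.1, ?_⟩
    · rw [recol_embed2]
      exact q.1.1.injective
    · rw [recol_inr]
      exact q.2.2⟩
  left_inv c := by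
    apply Subtype.ext
    funext v
    rcases v with (_|a) | (_|b) <;> rfl
  right_inv q := by
    apply Subtype.ext
    obtain ⟨⟨φ, x, y⟩, hq⟩ := q
    refine Prod.ext ?_ rfl
    exact DFunLike.ext _ _ fun s => by rcases s with a | b <;> rfl

lemma pair_count2 (l : ℕ) (T : Finset (Fin l)) (f : Fin l → Fin l) :
    Nat.card {p : Fin l × Fin l // p.2 ∉ T ∧ p.1 ≠ f p.2} = (l - T.card) * (l - 1) := by
  classical
  rw [Nat.card_eq_fintype_card, Fintype.card_subtype]
  have hsub : (Tᶜ.image fun y => (f y, y)) ⊆ univ ×ˢ Tᶜ := by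
    intro p hp
    simp only [mem_image, mem_compl] at hp
    obtain ⟨y, hy, rfl⟩ := hp
    simp [mem_product, hy]
  have hset : (univ.filter fun p : Fin l × Fin l => p.2 ∉ T ∧ p.1 ≠ f p.2)
      = (univ ×ˢ Tᶜ) \ (Tᶜ.image fun y => (f y, y)) := by
    ext p
    rw [mem_filter, mem_sdiff, mem_product]
    constructor
    · rintro ⟨-, h1, h2⟩
      refine ⟨⟨mem_univ _, mem_compl.mpr h1⟩, fun hc => ?_⟩
      obtain ⟨y, -, e⟩ := mem_image.mp hc
      rw [← e] at h2
      exact h2 rfl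
    · rintro ⟨⟨-, h1⟩, h2⟩
      rw [mem_compl] at h1
      exact ⟨mem_univ _, h1, fun e =>
        h2 (mem_image.mpr ⟨p.2, mem_compl.mpr h1, Prod.ext e.symm rfl⟩)⟩
  have key : ∀ a b : ℕ, b * a - a = a * (b - 1) := by
    intro a b
    cases b with
    | zero => simp
    | succ n => rw [Nat.succ_sub_one, Nat.succ_mul, Nat.add_sub_cancel, Nat.mul_comm]
  rw [hset, card_sdiff_of_subset hsub, card_product, card_image_of_injective _
    (fun a b e => congrArg Prod.snd e), card_univ, card_compl, Fintype.card_fin, key]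

lemma chromP_G3 (i j l : ℕ) (w : Option (Fin j)) :
    chromP ((exampleG1 i j).deleteEdges
        {e | Sum.inl none ∈ e ∧ e ≠ s(Sum.inl none, Sum.inr w)}) l =
      l.descFactorial (i + j) * ((l - i) * (l - 1)) := by
  classical
  have e := (equiv3 i j l w).trans (Equiv.subtypeProdEquivSigmaSubtype (P3 (i := i) (l := l) w))
  rw [chromP, Nat.card_congr e, Nat.card_eq_fintype_card, Fintype.card_sigma]
  have hfib : ∀ φ : (Fin i ⊕ Fin j) ↪ Fin l,
      Fintype.card {p : Fin l × Fin l // P3 w φ p} = (l - i) * (l - 1) := by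
    intro φ
    set T : Finset (Fin l) := univ.image fun a : Fin i => φ (.inl a) with hT
    have hTcard : T.card = i := by
      rw [hT, card_image_of_injective _ (fun a b e => Sum.inl_injective (φ.injective e)),
        card_univ, Fintype.card_fin]
    have := pair_count2 l T (fun z => w.elim z (fun b => φ (.inr b)))
    rw [hTcard] at this
    rw [← Nat.card_eq_fintype_card, ← this]
    apply Nat.card_congr
    apply Equiv.subtypeEquivRight
    intro p
    simp only [P3, hT, mem_image, mem_univ, true_and, not_exists, @eq_comm (Fin l)]
  calc (∑ φ : (Fin i ⊕ Fin j) ↪ Fin l, Fintype.card {p : Fin l × Fin l // P3 w φ p})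
      = ∑ _φ : (Fin i ⊕ Fin j) ↪ Fin l, ((l - i) * (l - 1)) :=
        Finset.sum_congr rfl fun φ _ => hfib φ
    _ = Fintype.card ((Fin i ⊕ Fin j) ↪ Fin l) * ((l - i) * (l - 1)) := by
        rw [Finset.sum_const, card_univ, smul_eq_mul]
    _ = l.descFactorial (i + j) * ((l - i) * (l - 1)) := by
        rw [Fintype.card_embedding_eq]
        simp [Fintype.card_sum]

end Conj3Aux

/-- **Example, second part.** Let `G₁ = (Kᵢ + v) ∨ (Kⱼ + u)` with
`i, j ≥ 1` and `i > (j+1)² + 1 + 2/j`, and let `G₃` be obtained from `G₁` by deleting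
all edges incident to `v` except the one edge `va` (for a neighbor `a` of `v`).
Then `μ(G₁) < μ(G₃)`. -/
theorem example_counterexample_conj3 (i j : ℕ) (hi : 1 ≤ i) (hj : 1 ≤ j)
    (h : ((j : ℚ) + 1) ^ 2 + 1 + 2 / (j : ℚ) < (i : ℚ))
    (a : Option (Fin i) ⊕ Option (Fin j)) (ha : (exampleG1 i j).Adj (Sum.inl none) a) :
    meanColor (exampleG1 i j) <
      meanColor ((exampleG1 i j).deleteEdges
        {e | Sum.inl none ∈ e ∧ e ≠ s(Sum.inl none, a)}) := by
  obtain ⟨w, rfl⟩ : ∃ w, a = Sum.inr w := by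
    rcases (Conj3Aux.adj1_iff _ _).mp ha with
      ⟨x,y,hxy,h1,h2⟩|⟨x,y,hxy,h1,h2⟩|⟨x,y,h1,h2⟩|⟨x,y,h1,h2⟩
    · exact absurd h1 (by simp)
    · exact absurd h1 (by simp)
    · exact ⟨y, h2⟩
    · exact absurd h1 (by simp)
  have hcard : Fintype.card (Option (Fin i) ⊕ Option (Fin j)) = i + j + 2 := by
    simp only [Fintype.card_sum, Fintype.card_option, Fintype.card_fin]
    omega
  set D1 := (i+j+1).descFactorial (i+j) with hD1
  set D2 := (i+j+2).descFactorial (i+j) with hD2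
  have hd1 : 0 < D1 := Nat.pos_of_ne_zero fun h0 => by
    rw [hD1, Nat.descFactorial_eq_zero_iff_lt] at h0; omega
  have hd2 : 0 < D2 := Nat.pos_of_ne_zero fun h0 => by
    rw [hD2, Nat.descFactorial_eq_zero_iff_lt] at h0; omega
  have hA : chromP (exampleG1 i j) (i+j+1) = D1 * (i*j+i+j) := by
    rw [Conj3Aux.chromP_G1, ← hD1]
    congr 1
    have e1 : i+j+1-j = i+1 := by omega
    have e2 : i+j+1-i = j+1 := by omega
    have e3 : i+j+1-(j+i) = 1 := by omega
    rw [e1, e2, e3]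
    exact Nat.sub_eq_of_eq_add (by ring)
  have hB : chromP (exampleG1 i j) (i+j+2) = D2 * (i*j+2*i+2*j+2) := by
    rw [Conj3Aux.chromP_G1, ← hD2]
    congr 1
    have e1 : i+j+2-j = i+2 := by omega
    have e2 : i+j+2-i = j+2 := by omega
    have e3 : i+j+2-(j+i) = 2 := by omega
    rw [e1, e2, e3]
    exact Nat.sub_eq_of_eq_add (by ring)
  have hC : chromP ((exampleG1 i j).deleteEdges
      {e | Sum.inl none ∈ e ∧ e ≠ s(Sum.inl none, Sum.inr w)}) (i+j+1)
      = D1 * ((j+1)*(i+j)) := by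
    rw [Conj3Aux.chromP_G3, ← hD1]
    congr 1
    have e1 : i+j+1-i = j+1 := by omega
    have e2 : i+j+1-1 = i+j := by omega
    rw [e1, e2]
  have hE : chromP ((exampleG1 i j).deleteEdges
      {e | Sum.inl none ∈ e ∧ e ≠ s(Sum.inl none, Sum.inr w)}) (i+j+2)
      = D2 * ((j+2)*(i+j+1)) := by
    rw [Conj3Aux.chromP_G3, ← hD2]
    congr 1
    have e1 : i+j+2-i = j+2 := by omega
    have e2 : i+j+2-1 = i+j+1 := by omega
    rw [e1, e2]
  unfold meanColor
  rw [hcard]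
  have hsub : i + j + 2 - 1 = i + j + 1 := by omega
  rw [hsub, hA, hB, hC, hE]
  -- now pure rational arithmetic
  have hj0 : (0:ℚ) < (j:ℚ) := by exact_mod_cast hj
  have hi0 : (0:ℚ) < (i:ℚ) := by exact_mod_cast hi
  have hd1q : (0:ℚ) < (D1:ℚ) := by exact_mod_cast hd1
  have hd2q : (0:ℚ) < (D2:ℚ) := by exact_mod_cast hd2
  have h2 : (j:ℚ)^2 + (j:ℚ) < (i:ℚ) := by
    have hdiv : (0:ℚ) < 2 / (j:ℚ) := by positivity
    nlinarith [h, hdiv]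
  have key : ((j:ℚ)+1)*((i:ℚ)+(j:ℚ)) * ((i:ℚ)*(j:ℚ)+2*(i:ℚ)+2*(j:ℚ)+2)
      < ((i:ℚ)*(j:ℚ)+(i:ℚ)+(j:ℚ)) * (((j:ℚ)+2)*((i:ℚ)+(j:ℚ)+1)) := by
    nlinarith [mul_pos hj0 (sub_pos.mpr h2)]
  push_cast
  apply mul_lt_mul_of_pos_left _ (by positivity : (0:ℚ) < (i:ℚ)+(j:ℚ)+2)
  apply sub_lt_sub_left
  have hBq : (0:ℚ) < (i:ℚ)*(j:ℚ)+2*(i:ℚ)+2*(j:ℚ)+2 := by positivity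
  have hEq : (0:ℚ) < ((j:ℚ)+2)*((i:ℚ)+(j:ℚ)+1) := by positivity
  rw [div_lt_div_iff₀ (by positivity) (by positivity)]
  nlinarith [mul_lt_mul_of_pos_left key (mul_pos hd1q hd2q)]
end

section
/- With $G_1$ as in the construction and $n=i+j+s$, one has $\tau(G_1,G_1-uv,n)=P(G_0,n)P(G_0,n-1)\big(i(t-j)+s(s-1)\big)$. Consequently, if $t<j$ and $i>\frac{s(s-1)}{j-t}$, then $\mu(G_1)<\mu(G_1-uv)$, so the spanning subgraph $G_1-uv$ of $G_1$ has strictly larger mean color number. -/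
open SimpleGraph Finset

/-- The graph `G₁` of Construction 2.1: `G₀` (containing a clique `K`) with two new
adjacent vertices `u = Sum.inr true` and `v = Sum.inr false` added, `u` joined to the
vertices of `A ⊆ K` and `v` joined to the vertices of `B ⊆ K`. -/
noncomputable def constructG1 {V₀ : Type*} (G₀ : SimpleGraph V₀) (A B : Finset V₀) :
    SimpleGraph (V₀ ⊕ Bool) :=
  G₀.map Function.Embedding.inl ⊔
    SimpleGraph.fromRel (fun x y =>
      (x = Sum.inr true ∧ y = Sum.inr false) ∨
      (∃ a ∈ A, x = Sum.inr true ∧ y = Sum.inl a) ∨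
      (∃ b ∈ B, x = Sum.inr false ∧ y = Sum.inl b))

/-! ### Auxiliary lemmas -/

open scoped Classical in
lemma chromP_eq_filter {V : Type*} [Fintype V] (G : SimpleGraph V) (l : ℕ) :
    chromP G l = (univ.filter fun c : V → Fin l => ∀ u v, G.Adj u v → c u ≠ c v).card := by
  rw [chromP, Nat.card_eq_fintype_card, Fintype.card_subtype]

lemma chromP_pos {V : Type*} [Fintype V] (G : SimpleGraph V) (l : ℕ)
    (hl : Fintype.card V ≤ l) : 0 < chromP G l := by
  rw [chromP, Nat.card_pos_iff]
  refine ⟨?_, Finite.of_injective (fun c => (c : V → Fin l)) Subtype.coe_injective⟩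
  obtain ⟨f⟩ : Nonempty (V ↪ Fin l) := Function.Embedding.nonempty_of_card_le (by simpa using hl)
  exact ⟨⟨f, fun x y h e => (G.ne_of_adj h) (f.injective e)⟩⟩

lemma card_pairs {α : Type*} [DecidableEq α] (SA SB : Finset α) :
    ((SA ×ˢ SB).filter fun p => p.1 ≠ p.2).card = SA.card * SB.card - (SA ∩ SB).card := by
  have h1 : ((SA ×ˢ SB).filter fun p => p.1 = p.2).card = (SA ∩ SB).card := by
    refine Finset.card_bij (fun p _ => p.1) ?_ ?_ ?_
    · rintro ⟨x, y⟩ hp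
      simp only [mem_filter, mem_product] at hp
      obtain ⟨⟨h1, h2⟩, h3⟩ := hp
      subst h3
      simp [mem_inter, h1, h2]
    · rintro ⟨x, y⟩ hp ⟨x', y'⟩ hq h
      simp only [mem_filter] at hp hq
      simp_all
    · intro a ha
      simp only [mem_inter] at ha
      exact ⟨(a, a), by simp [ha.1, ha.2], rfl⟩
  have h2 := Finset.card_filter_add_card_filter_not (s := SA ×ˢ SB)
    (p := fun p => p.1 = p.2)
  rw [Finset.card_product, h1] at h2
  have h3 : (SA ∩ SB).card ≤ SA.card * SB.card := by
    rw [← Finset.card_product]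
    exact card_le_card_of_injOn (fun x => (x, x))
      (fun x hx => by simp only [mem_coe, mem_inter] at hx; simp [hx.1, hx.2])
      (fun a _ b _ h => (Prod.ext_iff.mp h).1)
  simp only [ne_eq]
  omega

section Construct

variable {V₀ : Type*} {G₀ : SimpleGraph V₀} {K A B : Finset V₀}

lemma adj_iff {x y : V₀ ⊕ Bool} : (constructG1 G₀ A B).Adj x y ↔
    (∃ a b, G₀.Adj a b ∧ x = Sum.inl a ∧ y = Sum.inl b) ∨
    ((x = Sum.inr true ∧ y = Sum.inr false) ∨ (y = Sum.inr true ∧ x = Sum.inr false)) ∨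
    (∃ a ∈ A, (x = Sum.inr true ∧ y = Sum.inl a) ∨ (y = Sum.inr true ∧ x = Sum.inl a)) ∨
    (∃ b ∈ B, (x = Sum.inr false ∧ y = Sum.inl b) ∨ (y = Sum.inr false ∧ x = Sum.inl b)) := by
  simp only [constructG1, sup_adj, map_adj, fromRel_adj]
  constructor
  · rintro (⟨a, b, h, rfl, rfl⟩ | ⟨hne, (h | h)⟩)
    · exact Or.inl ⟨a, b, h, rfl, rfl⟩
    · rcases h with ⟨rfl, rfl⟩ | ⟨a, ha, rfl, rfl⟩ | ⟨b, hb, rfl, rfl⟩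
      · exact Or.inr (Or.inl (Or.inl ⟨rfl, rfl⟩))
      · exact Or.inr (Or.inr (Or.inl ⟨a, ha, Or.inl ⟨rfl, rfl⟩⟩))
      · exact Or.inr (Or.inr (Or.inr ⟨b, hb, Or.inl ⟨rfl, rfl⟩⟩))
    · rcases h with ⟨rfl, rfl⟩ | ⟨a, ha, rfl, rfl⟩ | ⟨b, hb, rfl, rfl⟩
      · exact Or.inr (Or.inl (Or.inr ⟨rfl, rfl⟩))
      · exact Or.inr (Or.inr (Or.inl ⟨a, ha, Or.inr ⟨rfl, rfl⟩⟩))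
      · exact Or.inr (Or.inr (Or.inr ⟨b, hb, Or.inr ⟨rfl, rfl⟩⟩))
  · rintro (⟨a, b, h, rfl, rfl⟩ | (⟨rfl, rfl⟩ | ⟨rfl, rfl⟩) |
      ⟨a, ha, (⟨rfl, rfl⟩ | ⟨rfl, rfl⟩)⟩ | ⟨b, hb, (⟨rfl, rfl⟩ | ⟨rfl, rfl⟩)⟩)
    · exact Or.inl ⟨a, b, h, rfl, rfl⟩
    · exact Or.inr ⟨by simp, Or.inl (Or.inl ⟨rfl, rfl⟩)⟩
    · exact Or.inr ⟨by simp, Or.inr (Or.inl ⟨rfl, rfl⟩)⟩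
    · exact Or.inr ⟨by simp, Or.inl (Or.inr (Or.inl ⟨a, ha, rfl, rfl⟩))⟩
    · exact Or.inr ⟨by simp, Or.inr (Or.inr (Or.inl ⟨a, ha, rfl, rfl⟩))⟩
    · exact Or.inr ⟨by simp, Or.inl (Or.inr (Or.inr ⟨b, hb, rfl, rfl⟩))⟩
    · exact Or.inr ⟨by simp, Or.inr (Or.inr (Or.inr ⟨b, hb, rfl, rfl⟩))⟩

lemma proper_G1_iff {l : ℕ} (c : V₀ ⊕ Bool → Fin l) :
    (∀ x y, (constructG1 G₀ A B).Adj x y → c x ≠ c y) ↔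
      ((∀ x y, G₀.Adj x y → c (Sum.inl x) ≠ c (Sum.inl y)) ∧
       (((∀ a ∈ A, c (Sum.inr true) ≠ c (Sum.inl a)) ∧
         (∀ b ∈ B, c (Sum.inr false) ≠ c (Sum.inl b))) ∧
        c (Sum.inr true) ≠ c (Sum.inr false))) := by
  constructor
  · intro h
    refine ⟨fun x y hxy => h _ _ (adj_iff.mpr (Or.inl ⟨x, y, hxy, rfl, rfl⟩)),
      ⟨fun a ha => h _ _ (adj_iff.mpr ?_), fun b hb => h _ _ (adj_iff.mpr ?_)⟩,
      h _ _ (adj_iff.mpr (Or.inr (Or.inl (Or.inl ⟨rfl, rfl⟩))))⟩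
    · exact Or.inr (Or.inr (Or.inl ⟨a, ha, Or.inl ⟨rfl, rfl⟩⟩))
    · exact Or.inr (Or.inr (Or.inr ⟨b, hb, Or.inl ⟨rfl, rfl⟩⟩))
  · rintro ⟨h0, ⟨hA', hB'⟩, huv⟩ x y hadj
    rcases adj_iff.mp hadj with (⟨a, b, h, rfl, rfl⟩ | (⟨rfl, rfl⟩ | ⟨rfl, rfl⟩) |
      ⟨a, ha, (⟨rfl, rfl⟩ | ⟨rfl, rfl⟩)⟩ | ⟨b, hb, (⟨rfl, rfl⟩ | ⟨rfl, rfl⟩)⟩)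
    · exact h0 _ _ h
    · exact huv
    · exact huv.symm
    · exact hA' _ ha
    · exact (hA' _ ha).symm
    · exact hB' _ hb
    · exact (hB' _ hb).symm

lemma proper_del_iff {l : ℕ} (c : V₀ ⊕ Bool → Fin l) :
    (∀ x y, ((constructG1 G₀ A B).deleteEdges {s(Sum.inr true, Sum.inr false)}).Adj x y →
        c x ≠ c y) ↔
      ((∀ x y, G₀.Adj x y → c (Sum.inl x) ≠ c (Sum.inl y)) ∧
       ((∀ a ∈ A, c (Sum.inr true) ≠ c (Sum.inl a)) ∧
        (∀ b ∈ B, c (Sum.inr false) ≠ c (Sum.inl b)))) := by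
  constructor
  · intro h
    refine ⟨fun x y hxy => h _ _ ⟨adj_iff.mpr (Or.inl ⟨x, y, hxy, rfl, rfl⟩), by simp⟩,
      fun a ha => h _ _ ⟨adj_iff.mpr (Or.inr (Or.inr (Or.inl ⟨a, ha, Or.inl ⟨rfl, rfl⟩⟩))), by simp⟩,
      fun b hb => h _ _ ⟨adj_iff.mpr (Or.inr (Or.inr (Or.inr ⟨b, hb, Or.inl ⟨rfl, rfl⟩⟩))), by simp⟩⟩
  · rintro ⟨h0, hA', hB'⟩ x y hadj
    rw [deleteEdges_adj] at hadj
    obtain ⟨hadj, hne⟩ := hadj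
    rcases adj_iff.mp hadj with (⟨a, b, h, rfl, rfl⟩ | (⟨rfl, rfl⟩ | ⟨rfl, rfl⟩) |
      ⟨a, ha, (⟨rfl, rfl⟩ | ⟨rfl, rfl⟩)⟩ | ⟨b, hb, (⟨rfl, rfl⟩ | ⟨rfl, rfl⟩)⟩)
    · exact h0 _ _ h
    · simp at hne
    · rw [Sym2.eq_swap] at hne; simp at hne
    · exact hA' _ ha
    · exact (hA' _ ha).symm
    · exact hB' _ hb
    · exact (hB' _ hb).symm

end Construct

section Counts

variable {V₀ : Type*} [Fintype V₀] [DecidableEq V₀] {G₀ : SimpleGraph V₀} {K A B : Finset V₀}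

open scoped Classical in
lemma count_pairs_del {l : ℕ} {c0 : V₀ → Fin l}
    (hc0 : ∀ x y, G₀.Adj x y → c0 x ≠ c0 y)
    (hclique : G₀.IsClique (K : Set V₀)) (hA : A ⊆ K) (hB : B ⊆ K) :
    Nat.card {p : Fin l × Fin l //
        (∀ a ∈ A, p.1 ≠ c0 a) ∧ (∀ b ∈ B, p.2 ≠ c0 b)} =
      (l - A.card) * (l - B.card) := by
  rw [Nat.card_eq_fintype_card, Fintype.card_subtype]
  have hinj : Set.InjOn c0 (K : Set V₀) := by
    intro a ha b hb h
    by_contra hne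
    exact hc0 a b (hclique ha hb hne) h
  have hfe : (univ.filter fun p : Fin l × Fin l =>
      (∀ a ∈ A, p.1 ≠ c0 a) ∧ (∀ b ∈ B, p.2 ≠ c0 b)) =
      (univ \ A.image c0) ×ˢ (univ \ B.image c0) := by
    ext ⟨x, y⟩
    simp only [mem_filter, mem_univ, true_and, mem_product, mem_sdiff, mem_image]
    push_neg
    aesop
  rw [hfe, card_product, card_sdiff_of_subset (subset_univ _), card_sdiff_of_subset (subset_univ _),
    card_univ, Fintype.card_fin,
    Finset.card_image_of_injOn (hinj.mono (by exact_mod_cast hA)),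
    Finset.card_image_of_injOn (hinj.mono (by exact_mod_cast hB))]

open scoped Classical in
lemma count_pairs_full {l : ℕ} {c0 : V₀ → Fin l}
    (hc0 : ∀ x y, G₀.Adj x y → c0 x ≠ c0 y)
    (hclique : G₀.IsClique (K : Set V₀)) (hA : A ⊆ K) (hB : B ⊆ K) (hABun : A ∪ B = K) :
    Nat.card {p : Fin l × Fin l //
        ((∀ a ∈ A, p.1 ≠ c0 a) ∧ (∀ b ∈ B, p.2 ≠ c0 b)) ∧ p.1 ≠ p.2} =
      (l - A.card) * (l - B.card) - (l - K.card) := by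
  rw [Nat.card_eq_fintype_card, Fintype.card_subtype]
  have hinj : Set.InjOn c0 (K : Set V₀) := by
    intro a ha b hb h
    by_contra hne
    exact hc0 a b (hclique ha hb hne) h
  have hfe : (univ.filter fun p : Fin l × Fin l =>
      ((∀ a ∈ A, p.1 ≠ c0 a) ∧ (∀ b ∈ B, p.2 ≠ c0 b)) ∧ p.1 ≠ p.2) =
      (((univ \ A.image c0) ×ˢ (univ \ B.image c0)).filter fun p => p.1 ≠ p.2) := by
    ext ⟨x, y⟩
    simp only [mem_filter, mem_univ, true_and, mem_product, mem_sdiff, mem_image]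
    push_neg
    aesop
  have hint : (univ \ A.image c0) ∩ (univ \ B.image c0) = univ \ K.image c0 := by
    rw [← hABun, Finset.image_union, Finset.sdiff_union_distrib]
  rw [hfe, card_pairs, hint, card_sdiff_of_subset (subset_univ _), card_sdiff_of_subset (subset_univ _),
    card_sdiff_of_subset (subset_univ _), card_univ, Fintype.card_fin,
    Finset.card_image_of_injOn (hinj.mono (by exact_mod_cast hA)),
    Finset.card_image_of_injOn (hinj.mono (by exact_mod_cast hB)),
    Finset.card_image_of_injOn hinj]

/-- The colorings of `G₁ - uv` fiber over the proper colorings of `G₀`. -/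
noncomputable def equivDel (G₀ : SimpleGraph V₀) (A B : Finset V₀) (l : ℕ) :
    {c : V₀ ⊕ Bool → Fin l //
        ∀ x y, ((constructG1 G₀ A B).deleteEdges {s(Sum.inr true, Sum.inr false)}).Adj x y →
          c x ≠ c y} ≃
      Σ c0 : {c0 : V₀ → Fin l // ∀ x y, G₀.Adj x y → c0 x ≠ c0 y},
        {p : Fin l × Fin l //
          (∀ a ∈ A, p.1 ≠ c0.1 a) ∧ (∀ b ∈ B, p.2 ≠ c0.1 b)} where
  toFun c :=
    ⟨⟨fun x => c.1 (Sum.inl x), fun x y h => ((proper_del_iff c.1).mp c.2).1 x y h⟩,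
     ⟨(c.1 (Sum.inr true), c.1 (Sum.inr false)),
      fun a ha => ((proper_del_iff c.1).mp c.2).2.1 a ha,
      fun b hb => ((proper_del_iff c.1).mp c.2).2.2 b hb⟩⟩
  invFun x :=
    ⟨Sum.elim x.1.1 (fun b => bif b then x.2.1.1 else x.2.1.2),
     (proper_del_iff _).mpr
       ⟨x.1.2, fun a ha => x.2.2.1 a ha, fun b hb => x.2.2.2 b hb⟩⟩
  left_inv c := by
    apply Subtype.ext
    funext x
    rcases x with x | b
    · rfl
    · cases b <;> rfl
  right_inv x := rfl

/-- The colorings of `G₁` fiber over the proper colorings of `G₀`. -/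
noncomputable def equivFull (G₀ : SimpleGraph V₀) (A B : Finset V₀) (l : ℕ) :
    {c : V₀ ⊕ Bool → Fin l // ∀ x y, (constructG1 G₀ A B).Adj x y → c x ≠ c y} ≃
      Σ c0 : {c0 : V₀ → Fin l // ∀ x y, G₀.Adj x y → c0 x ≠ c0 y},
        {p : Fin l × Fin l //
          ((∀ a ∈ A, p.1 ≠ c0.1 a) ∧ (∀ b ∈ B, p.2 ≠ c0.1 b)) ∧ p.1 ≠ p.2} where
  toFun c :=
    ⟨⟨fun x => c.1 (Sum.inl x), fun x y h => ((proper_G1_iff c.1).mp c.2).1 x y h⟩,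
     ⟨(c.1 (Sum.inr true), c.1 (Sum.inr false)),
      ⟨fun a ha => ((proper_G1_iff c.1).mp c.2).2.1.1 a ha,
       fun b hb => ((proper_G1_iff c.1).mp c.2).2.1.2 b hb⟩,
      ((proper_G1_iff c.1).mp c.2).2.2⟩⟩
  invFun x :=
    ⟨Sum.elim x.1.1 (fun b => bif b then x.2.1.1 else x.2.1.2),
     (proper_G1_iff _).mpr
       ⟨x.1.2, ⟨fun a ha => x.2.2.1.1 a ha, fun b hb => x.2.2.1.2 b hb⟩, x.2.2.2⟩⟩
  left_inv c := by
    apply Subtype.ext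
    funext x
    rcases x with x | b
    · rfl
    · cases b <;> rfl
  right_inv x := rfl

open scoped Classical in
lemma chromP_del (hclique : G₀.IsClique (K : Set V₀)) (hA : A ⊆ K) (hB : B ⊆ K) (l : ℕ) :
    chromP ((constructG1 G₀ A B).deleteEdges {s(Sum.inr true, Sum.inr false)}) l =
      chromP G₀ l * ((l - A.card) * (l - B.card)) := by
  rw [chromP, Nat.card_congr (equivDel G₀ A B l), Nat.card_eq_fintype_card,
    Fintype.card_sigma]
  rw [Finset.sum_congr rfl (fun c0 _ => by
    rw [← Nat.card_eq_fintype_card, count_pairs_del c0.2 hclique hA hB])]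
  rw [Finset.sum_const, smul_eq_mul, Finset.card_univ, ← Nat.card_eq_fintype_card]
  rfl

open scoped Classical in
lemma chromP_full (hclique : G₀.IsClique (K : Set V₀)) (hA : A ⊆ K) (hB : B ⊆ K)
    (hABun : A ∪ B = K) (l : ℕ) :
    chromP (constructG1 G₀ A B) l =
      chromP G₀ l * ((l - A.card) * (l - B.card) - (l - K.card)) := by
  rw [chromP, Nat.card_congr (equivFull G₀ A B l), Nat.card_eq_fintype_card,
    Fintype.card_sigma]
  rw [Finset.sum_congr rfl (fun c0 _ => by
    rw [← Nat.card_eq_fintype_card, count_pairs_full c0.2 hclique hA hB hABun])]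
  rw [Finset.sum_const, smul_eq_mul, Finset.card_univ, ← Nat.card_eq_fintype_card]
  rfl

end Counts

set_option maxHeartbeats 1600000 in
/-- **Remark.** With `G₁` as in the construction and `n = i+j+s`,
`τ(G₁, G₁-uv, n) = P(G₀,n)P(G₀,n-1)(i(t-j)+s(s-1))`; consequently, if `t < j` and
`i > s(s-1)/(j-t)`, then `μ(G₁) < μ(G₁ - uv)`: the spanning subgraph `G₁ - uv`
has strictly larger mean color number. -/
theorem tau_G1_G1_sub_uv {V₀ : Type*} [Fintype V₀] [DecidableEq V₀]
    (G₀ : SimpleGraph V₀) (K A B : Finset V₀) (i j t s k n : ℕ)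
    (hclique : G₀.IsClique (K : Set V₀)) (hKcard : K.card = k) (hk2 : 2 ≤ k)
    (hA : A ⊆ K) (hB : B ⊆ K) (hAcard : A.card = i + t) (hBcard : B.card = j)
    (hABint : (A ∩ B).card = t) (hABun : A ∪ B = K)
    (hi : 1 ≤ i) (hj : 1 ≤ j) (hs : 2 ≤ s) (hk : k = i + j) (hn : n = k + s)
    (hV₀ : Fintype.card V₀ = k + s - 2) :
    tau (constructG1 G₀ A B)
        ((constructG1 G₀ A B).deleteEdges {s(Sum.inr true, Sum.inr false)}) n =
      (chromP G₀ n : ℤ) * (chromP G₀ (n - 1) : ℤ) *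
        ((i : ℤ) * ((t : ℤ) - j) + (s : ℤ) * ((s : ℤ) - 1)) ∧
    (t < j → ((s : ℚ) * ((s : ℚ) - 1)) / ((j : ℚ) - t) < (i : ℚ) →
      meanColor (constructG1 G₀ A B) <
        meanColor ((constructG1 G₀ A B).deleteEdges {s(Sum.inr true, Sum.inr false)})) := by
  have htj : t ≤ j := by
    rw [← hABint, ← hBcard]; exact card_le_card inter_subset_right
  have hitk : i + t ≤ k := by
    rw [← hAcard, ← hKcard]; exact card_le_card hA
  -- the four chromatic polynomial values
  have hfn := chromP_full hclique hA hB hABun n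
  have hfn1 := chromP_full hclique hA hB hABun (n - 1)
  have hdn := chromP_del hclique hA hB n
  have hdn1 := chromP_del hclique hA hB (n - 1)
  rw [hAcard, hBcard, hKcard] at hfn hfn1
  rw [hAcard, hBcard] at hdn hdn1
  -- concrete values of the ℕ-subtractions
  have e1 : n - (i + t) = j - t + s := by omega
  have e2 : n - j = i + s := by omega
  have e3 : n - k = s := by omega
  have e4 : n - 1 - (i + t) = j - t + s - 1 := by omega
  have e5 : n - 1 - j = i + s - 1 := by omega
  have e6 : n - 1 - k = s - 1 := by omega
  rw [e1, e2, e3] at hfn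
  rw [e1, e2] at hdn
  rw [e4, e5, e6] at hfn1
  rw [e4, e5] at hdn1
  -- bounds to remove the outer subtractions
  have hb1 : s ≤ (j - t + s) * (i + s) := by
    calc s ≤ (j - t + s) * 1 := by omega
    _ ≤ (j - t + s) * (i + s) := Nat.mul_le_mul_left _ (by omega)
  have hb2 : s - 1 ≤ (j - t + s - 1) * (i + s - 1) := by
    calc s - 1 ≤ (j - t + s - 1) * 1 := by omega
    _ ≤ (j - t + s - 1) * (i + s - 1) := Nat.mul_le_mul_left _ (by omega)
  -- cast versions
  have c1 : ((j - t + s : ℕ) : ℤ) = (j : ℤ) - t + s := by omega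
  have c2 : ((i + s : ℕ) : ℤ) = (i : ℤ) + s := by omega
  have c4 : ((j - t + s - 1 : ℕ) : ℤ) = (j : ℤ) - t + s - 1 := by omega
  have c5 : ((i + s - 1 : ℕ) : ℤ) = (i : ℤ) + s - 1 := by omega
  have hX1 : (((j - t + s) * (i + s) - s : ℕ) : ℤ) =
      ((j : ℤ) - t + s) * ((i : ℤ) + s) - s := by
    rw [Nat.cast_sub hb1, Nat.cast_mul, c1, c2]
  have hX2 : (((j - t + s - 1) * (i + s - 1) - (s - 1) : ℕ) : ℤ) =
      ((j : ℤ) - t + s - 1) * ((i : ℤ) + s - 1) - ((s : ℤ) - 1) := by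
    rw [Nat.cast_sub hb2, Nat.cast_mul, c4, c5]
    congr 1
    omega
  have hY1 : (((j - t + s) * (i + s) : ℕ) : ℤ) = ((j : ℤ) - t + s) * ((i : ℤ) + s) := by
    rw [Nat.cast_mul, c1, c2]
  have hY2 : (((j - t + s - 1) * (i + s - 1) : ℕ) : ℤ) =
      ((j : ℤ) - t + s - 1) * ((i : ℤ) + s - 1) := by
    rw [Nat.cast_mul, c4, c5]
  have htau : tau (constructG1 G₀ A B)
      ((constructG1 G₀ A B).deleteEdges {s(Sum.inr true, Sum.inr false)}) n =
      (chromP G₀ n : ℤ) * (chromP G₀ (n - 1) : ℤ) *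
        ((i : ℤ) * ((t : ℤ) - j) + (s : ℤ) * ((s : ℤ) - 1)) := by
    rw [tau, hfn, hfn1, hdn, hdn1]
    push_cast [hX1, hX2, hY1, hY2]
    ring
  refine ⟨htau, fun htj' hrat => ?_⟩
  -- positivity facts
  have hV : Fintype.card (V₀ ⊕ Bool) = n := by
    rw [Fintype.card_sum, hV₀]
    simp
    omega
  have pa : 0 < chromP G₀ n := chromP_pos _ _ (by omega)
  have pb : 0 < chromP G₀ (n - 1) := chromP_pos _ _ (by omega)
  have pfn : 0 < chromP (constructG1 G₀ A B) n := chromP_pos _ _ (by omega)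
  have pdn : 0 < chromP ((constructG1 G₀ A B).deleteEdges
      {s(Sum.inr true, Sum.inr false)}) n := chromP_pos _ _ (by omega)
  have pfn1 : 0 < chromP (constructG1 G₀ A B) (n - 1) := by
    rw [hfn1]
    have h1 : s * 1 ≤ (j - t + s - 1) * (i + s - 1) :=
      Nat.mul_le_mul (by omega) (by omega)
    exact Nat.mul_pos pb (by omega)
  have pdn1 : 0 < chromP ((constructG1 G₀ A B).deleteEdges
      {s(Sum.inr true, Sum.inr false)}) (n - 1) := by
    rw [hdn1]
    exact Nat.mul_pos pb (Nat.mul_pos (by omega) (by omega))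
  -- the bracket is negative
  have hneg : ((i : ℤ) * ((t : ℤ) - j) + (s : ℤ) * ((s : ℤ) - 1)) < 0 := by
    have hjtq : (0 : ℚ) < (j : ℚ) - t := by
      have : (t : ℚ) < j := by exact_mod_cast htj'
      linarith
    have h1 : (s : ℚ) * ((s : ℚ) - 1) < (i : ℚ) * ((j : ℚ) - t) :=
      (div_lt_iff₀ hjtq).mp hrat
    have h2 : (s : ℤ) * ((s : ℤ) - 1) < (i : ℤ) * ((j : ℤ) - t) := by
      exact_mod_cast h1
    linarith
  have htaulneg : (chromP (constructG1 G₀ A B) n : ℤ) *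
      (chromP ((constructG1 G₀ A B).deleteEdges {s(Sum.inr true, Sum.inr false)}) (n - 1) : ℤ) -
      (chromP (constructG1 G₀ A B) (n - 1) : ℤ) *
      (chromP ((constructG1 G₀ A B).deleteEdges {s(Sum.inr true, Sum.inr false)}) n : ℤ) < 0 := by
    have h := htau
    rw [tau] at h
    rw [h]
    exact mul_neg_of_pos_of_neg
      (mul_pos (Int.natCast_pos.mpr pa) (Int.natCast_pos.mpr pb)) hneg
  -- compare mean colors
  rw [meanColor, meanColor, hV]
  obtain ⟨q1, hq1⟩ : ∃ m, chromP (constructG1 G₀ A B) n = m := ⟨_, rfl⟩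
  obtain ⟨q1', hq1'⟩ : ∃ m, chromP (constructG1 G₀ A B) (n - 1) = m := ⟨_, rfl⟩
  obtain ⟨q2, hq2⟩ : ∃ m, chromP ((constructG1 G₀ A B).deleteEdges
      {s(Sum.inr true, Sum.inr false)}) n = m := ⟨_, rfl⟩
  obtain ⟨q2', hq2'⟩ : ∃ m, chromP ((constructG1 G₀ A B).deleteEdges
      {s(Sum.inr true, Sum.inr false)}) (n - 1) = m := ⟨_, rfl⟩
  rw [hq1, hq1', hq2, hq2']
  rw [hq1] at pfn
  rw [hq2] at pdn
  rw [hq1, hq1', hq2, hq2'] at htaulneg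
  have hq : (q2' : ℚ) / q2 < (q1' : ℚ) / q1 := by
    rw [div_lt_div_iff₀ (by exact_mod_cast pdn) (by exact_mod_cast pfn)]
    have hz : (q1 : ℤ) * q2' < q1' * q2 := by linarith [htaulneg]
    have h' : (q1 : ℚ) * q2' < (q1' : ℚ) * q2 := by exact_mod_cast hz
    linarith
  have hnpos : (0 : ℚ) < (n : ℚ) := by
    have h0 : 0 < n := by omega
    exact_mod_cast h0
  apply mul_lt_mul_of_pos_left _ hnpos
  linarith
end

section
/- For the graph $G_1$ of the construction, $P(G_1,\lambda)=P(G_0,\lambda)\big((\lambda-i-t)(\lambda-j)-(\lambda-k)\big)$, where $k=i+j$. -/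
open SimpleGraph Finset

lemma proper_constructG1_iff {V₀ : Type*} (G₀ : SimpleGraph V₀) (A B : Finset V₀)
    {l : ℕ} (c : V₀ ⊕ Bool → Fin l) :
    (∀ u v, (constructG1 G₀ A B).Adj u v → c u ≠ c v) ↔
      ((∀ u v, G₀.Adj u v → c (Sum.inl u) ≠ c (Sum.inl v)) ∧
       c (Sum.inr true) ≠ c (Sum.inr false) ∧
       (∀ a ∈ A, c (Sum.inr true) ≠ c (Sum.inl a)) ∧
       (∀ b ∈ B, c (Sum.inr false) ≠ c (Sum.inl b))) := by
  constructor
  · intro h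
    refine ⟨fun u v huv => h _ _ ?_, h _ _ ?_, fun a ha => h _ _ ?_, fun b hb => h _ _ ?_⟩
    · exact Or.inl ⟨by simpa using huv.ne, u, v, huv, rfl, rfl⟩
    · exact Or.inr ⟨by simp, Or.inl (Or.inl ⟨rfl, rfl⟩)⟩
    · exact Or.inr ⟨by simp, Or.inl (Or.inr (Or.inl ⟨a, ha, rfl, rfl⟩))⟩
    · exact Or.inr ⟨by simp, Or.inl (Or.inr (Or.inr ⟨b, hb, rfl, rfl⟩))⟩
  · rintro ⟨h₀, huv, hA, hB⟩ u v h
    rcases h with ⟨-, a, b, hab, rfl, rfl⟩ | ⟨hne, h | h⟩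
    · exact h₀ a b hab
    · rcases h with ⟨rfl, rfl⟩ | ⟨a, ha, rfl, rfl⟩ | ⟨b, hb, rfl, rfl⟩
      · exact huv
      · exact hA a ha
      · exact hB b hb
    · rcases h with ⟨rfl, rfl⟩ | ⟨a, ha, rfl, rfl⟩ | ⟨b, hb, rfl, rfl⟩
      · exact huv.symm
      · exact (hA a ha).symm
      · exact (hB b hb).symm

/-- For the graph `G₁` of the construction (with `u` joined to the
`i+t` vertices of `A`, `v` joined to the `j` vertices of `B`, `|A ∩ B| = t`,
`A ∪ B = K` a `k`-clique of `G₀`, `k = i + j`),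
`P(G₁,λ) = P(G₀,λ)((λ-i-t)(λ-j)-(λ-k))`. -/
theorem chromP_constructG1 {V₀ : Type*} [DecidableEq V₀] (G₀ : SimpleGraph V₀)
    (K A B : Finset V₀) (i j t k : ℕ)
    (hclique : G₀.IsClique (K : Set V₀)) (hKcard : K.card = k) (hk2 : 2 ≤ k)
    (hA : A ⊆ K) (hB : B ⊆ K) (hAcard : A.card = i + t) (hBcard : B.card = j)
    (hABint : (A ∩ B).card = t) (hABun : A ∪ B = K)
    (hi : 1 ≤ i) (hj : 1 ≤ j) (hk : k = i + j) (l : ℕ) :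
    (chromP (constructG1 G₀ A B) l : ℤ) =
      (chromP G₀ l : ℤ) * (((l : ℤ) - i - t) * ((l : ℤ) - j) - ((l : ℤ) - k)) := by
  classical
  by_cases hne : Nonempty {c : V₀ → Fin l // ∀ u v, G₀.Adj u v → c u ≠ c v}
  · -- a proper coloring of G₀ exists, hence l ≥ k
    have hlk : k ≤ l := by
      obtain ⟨c₀, hc₀⟩ := hne
      have hinj : Set.InjOn c₀ (K : Set V₀) := by
        intro a ha b hb hab
        by_contra hne'
        exact hc₀ a b (hclique ha hb hne') hab
      calc k = (K.image c₀).card := by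
              rw [Finset.card_image_of_injOn hinj, hKcard]
        _ ≤ Fintype.card (Fin l) := by
              simpa using Finset.card_le_card (Finset.subset_univ (K.image c₀))
        _ = l := by simp
    have hit : i + t ≤ k := by rw [← hKcard, ← hAcard]; exact Finset.card_le_card hA
    have htj : t ≤ j := by
      rw [← hABint, ← hBcard]; exact Finset.card_le_card (Finset.inter_subset_right)
    set m : ℕ := (l - (i + t)) * (l - j) - (l - k) with hm
    -- fiber cardinality
    have fibcard : ∀ c : {c : V₀ → Fin l // ∀ u v, G₀.Adj u v → c u ≠ c v},
        Fintype.card {p : Fin l × Fin l //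
          p.1 ∉ A.image c.1 ∧ p.2 ∉ B.image c.1 ∧ p.1 ≠ p.2} = m := by
      rintro ⟨f, hf⟩
      have hinj : Set.InjOn f (K : Set V₀) := by
        intro a ha b hb hab
        by_contra hne'
        exact hf a b (hclique ha hb hne') hab
      set A' : Finset (Fin l) := A.image f with hA'
      set B' : Finset (Fin l) := B.image f with hB'
      have hA'card : A'.card = i + t := by
        rw [hA', Finset.card_image_of_injOn (hinj.mono (by exact_mod_cast hA)), hAcard]
      have hB'card : B'.card = j := by
        rw [hB', Finset.card_image_of_injOn (hinj.mono (by exact_mod_cast hB)), hBcard]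
      have hU : A' ∪ B' = K.image f := by
        rw [hA', hB', ← Finset.image_union, hABun]
      have hUcard : (A' ∪ B').card = k := by
        rw [hU, Finset.card_image_of_injOn hinj, hKcard]
      rw [Fintype.card_subtype]
      have hset : (Finset.univ.filter fun p : Fin l × Fin l =>
            p.1 ∉ A' ∧ p.2 ∉ B' ∧ p.1 ≠ p.2)
          = (A'ᶜ ×ˢ B'ᶜ).filter fun p => p.1 ≠ p.2 := by
        ext p
        simp [Finset.mem_product, and_assoc]
      rw [hset]
      have hsplit := Finset.card_filter_add_card_filter_not
        (s := A'ᶜ ×ˢ B'ᶜ) (p := fun p : Fin l × Fin l => p.1 ≠ p.2)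
      have hD : ((A'ᶜ ×ˢ B'ᶜ).filter fun p : Fin l × Fin l => ¬ p.1 ≠ p.2)
          = ((A' ∪ B')ᶜ).image (fun x => (x, x)) := by
        ext ⟨a, b⟩
        simp only [Finset.mem_filter, Finset.mem_product, Finset.mem_compl,
          Finset.mem_image, Finset.mem_union, not_or, not_not, Prod.mk.injEq]
        constructor
        · rintro ⟨⟨ha, hb⟩, rfl⟩
          exact ⟨a, ⟨ha, hb⟩, rfl, rfl⟩
        · rintro ⟨x, ⟨hxA, hxB⟩, rfl, rfl⟩
          exact ⟨⟨hxA, hxB⟩, rfl⟩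
      have hDcard : ((A'ᶜ ×ˢ B'ᶜ).filter fun p : Fin l × Fin l => ¬ p.1 ≠ p.2).card
          = l - k := by
        rw [hD, Finset.card_image_of_injective _ (fun x y hxy => by
          simpa using congrArg Prod.fst hxy), Finset.card_compl, hUcard]
        simp
      have hTcard : (A'ᶜ ×ˢ B'ᶜ).card = (l - (i + t)) * (l - j) := by
        rw [Finset.card_product, Finset.card_compl, Finset.card_compl, hA'card, hB'card]
        simp
      omega
    -- the equivalence
    have e : {c : V₀ ⊕ Bool → Fin l // ∀ u v, (constructG1 G₀ A B).Adj u v → c u ≠ c v} ≃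
        Σ c : {c : V₀ → Fin l // ∀ u v, G₀.Adj u v → c u ≠ c v},
          {p : Fin l × Fin l // p.1 ∉ A.image c.1 ∧ p.2 ∉ B.image c.1 ∧ p.1 ≠ p.2} := by
      refine
        { toFun := fun c => ⟨⟨fun v => c.1 (Sum.inl v),
            fun u v huv => ((proper_constructG1_iff G₀ A B c.1).1 c.2).1 u v huv⟩,
            ⟨(c.1 (Sum.inr true), c.1 (Sum.inr false)), ?_, ?_, ?_⟩⟩
          invFun := fun x => ⟨Sum.elim x.1.1 (fun b => if b then x.2.1.1 else x.2.1.2), ?_⟩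
          left_inv := ?_
          right_inv := ?_ }
      · obtain ⟨hp⟩ := (proper_constructG1_iff G₀ A B c.1).1 c.2
        simp only [Finset.mem_image, not_exists, not_and]
        intro a ha hEq
        obtain ⟨-, -, hA', -⟩ := (proper_constructG1_iff G₀ A B c.1).1 c.2
        exact hA' a ha hEq.symm
      · simp only [Finset.mem_image, not_exists, not_and]
        intro b hb hEq
        obtain ⟨-, -, -, hB'⟩ := (proper_constructG1_iff G₀ A B c.1).1 c.2
        exact hB' b hb hEq.symm
      · exact ((proper_constructG1_iff G₀ A B c.1).1 c.2).2.1
      · obtain ⟨⟨c₀, hc₀⟩, ⟨⟨a, b⟩, hpa, hpb, hpab⟩⟩ := x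
        refine (proper_constructG1_iff G₀ A B _).2 ⟨hc₀, by simpa using hpab, ?_, ?_⟩
        · intro a' ha' hEq
          simp only [Finset.mem_image, not_exists, not_and] at hpa
          exact hpa a' ha' (by simpa using hEq.symm)
        · intro b' hb' hEq
          simp only [Finset.mem_image, not_exists, not_and] at hpb
          exact hpb b' hb' (by simpa using hEq.symm)
      · rintro ⟨c, hc⟩
        apply Subtype.ext
        funext x
        rcases x with v | b
        · rfl
        · cases b <;> rfl
      · rintro ⟨⟨c₀, hc₀⟩, ⟨⟨a, b⟩, hp⟩⟩
        rfl
    have key : chromP (constructG1 G₀ A B) l = chromP G₀ l * m := by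
      rw [chromP, chromP, Nat.card_congr e,
        Nat.card_congr (Equiv.sigmaCongrRight
          (fun c => Fintype.equivFinOfCardEq (fibcard c))),
        Nat.card_congr (Equiv.sigmaEquivProd _ _), Nat.card_prod]
      simp
    rw [key]
    have h1 : i + t ≤ l := le_trans hit hlk
    have h2 : j ≤ l := le_trans (by omega) hlk
    have h4 : l - k ≤ (l - (i + t)) * (l - j) :=
      le_trans (Nat.sub_le_sub_left hit l) (Nat.le_mul_of_pos_right _ (by omega))
    push_cast [hm, Nat.cast_sub h4, Nat.cast_sub h1, Nat.cast_sub h2, Nat.cast_sub hlk]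
    ring
  · -- no proper coloring of G₀ : both sides vanish
    rw [not_nonempty_iff] at hne
    have h1 : IsEmpty {c : V₀ ⊕ Bool → Fin l //
        ∀ u v, (constructG1 G₀ A B).Adj u v → c u ≠ c v} := by
      constructor
      rintro ⟨c, hc⟩
      exact hne.false ⟨fun v => c (Sum.inl v),
        fun u v h => ((proper_constructG1_iff G₀ A B c).1 hc).1 u v h⟩
    rw [chromP, chromP, Nat.card_of_isEmpty, Nat.card_of_isEmpty]
    simp
end
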